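/- arXiv:1611.04869 — 2 statements merged into one kernel-verified Lean document; each statement's English description precedes it below -/
import Mathlib

section
/- Let K^u and K^0 be the kernels on a set M defined by K^u(x, dy) = E_x[e^{u(τ⁺_M − 1)} 1{X_{τ⁺_M} ∈ dy}] and K^0(x, dy) = P_x[X_{τ⁺_M} ∈ dy]. For real u ≥ 0 such that the Laplace transform condition sup_{x ∈ Mᶜ} P_x[X_1 ∈ Mᶜ] < e^{−u} holds and (1 − e^{−u})·sup_{x∈Mᶜ} E_x[τ⁺_M] < 1, one has the operator norm bound ‖K^u − K^0‖ ≤ (1 − e^{−u})·sup_{x∈M} E_x[τ⁺_M − 1] / (1 − (1 − e^{−u})·sup_{x∈Mᶜ} E_x[τ⁺_M]), where ‖·‖ is the supremum operator norm. -/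
open MeasureTheory ProbabilityTheory
open scoped ENNReal NNReal

noncomputable def retTime {S : Type*} (M : Set S) (ω : ℕ → S) : ℕ :=
  sInf {n | 1 ≤ n ∧ ω n ∈ M}

namespace NormKuK0
set_option linter.unusedSectionVars false

variable {S : Type*} [MeasurableSpace S]

/-- shift by `n` steps -/
def shift (n : ℕ) (ω : ℕ → S) : ℕ → S := fun i => ω (i + n)

lemma shift_shift (n m : ℕ) (ω : ℕ → S) : shift n (shift m ω) = shift (n + m) ω := by
  funext i; simp [shift, add_assoc]

lemma measurable_shift (n : ℕ) : Measurable (shift (S := S) n) :=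
  measurable_pi_lambda _ fun _ => measurable_pi_apply _

/-- no visit to `M` at times `1,...,n` -/
def staySet (M : Set S) (n : ℕ) : Set (ℕ → S) := {ω | ∀ k, 1 ≤ k → k ≤ n → ω k ∉ M}

noncomputable def stayInd (M : Set S) (n : ℕ) : (ℕ → S) → ℝ :=
  (staySet M n).indicator 1

variable {M : Set S}

lemma measurableSet_staySet (hM : MeasurableSet M) (n : ℕ) :
    MeasurableSet (staySet M n) := by
  have : staySet M n = ⋂ (k : ℕ) (_ : 1 ≤ k) (_ : k ≤ n), (fun ω : ℕ → S => ω k) ⁻¹' Mᶜ := by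
    ext ω; simp [staySet, Set.mem_iInter]
  rw [this]
  exact MeasurableSet.iInter fun k => MeasurableSet.iInter fun _ =>
    MeasurableSet.iInter fun _ => (measurable_pi_apply k) hM.compl

lemma measurable_stayInd (hM : MeasurableSet M) (n : ℕ) : Measurable (stayInd M n) :=
  (measurable_const.indicator (measurableSet_staySet hM n))

lemma stayInd_nonneg (n : ℕ) (ω : ℕ → S) : 0 ≤ stayInd M n ω := by
  unfold stayInd; exact Set.indicator_nonneg (fun _ _ => zero_le_one) ω

lemma stayInd_le_one (n : ℕ) (ω : ℕ → S) : stayInd M n ω ≤ 1 := by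
  unfold stayInd; classical
  rw [Set.indicator_apply]; split <;> norm_num

lemma stayInd_zero (ω : ℕ → S) : stayInd M 0 ω = 1 := by
  have : ω ∈ staySet M 0 := fun k hk hk0 => absurd (hk.trans hk0) (by norm_num)
  simp [stayInd, this]

lemma mem_staySet_succ_iff (n : ℕ) (ω : ℕ → S) :
    ω ∈ staySet M (n + 1) ↔ ω 1 ∉ M ∧ shift 1 ω ∈ staySet M n := by
  constructor
  · intro h
    refine ⟨h 1 le_rfl (by omega), fun k hk hk' => ?_⟩
    simpa [shift] using h (k + 1) (by omega) (by omega)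
  · rintro ⟨h1, h⟩ k hk hk'
    rcases Nat.eq_or_lt_of_le hk with rfl | hlt
    · exact h1
    · have := h (k - 1) (by omega) (by omega)
      simpa [shift, Nat.sub_add_cancel hk] using this

/-- indicator of `Mᶜ` -/
noncomputable def outInd (M : Set S) : S → ℝ := Mᶜ.indicator 1

lemma measurable_outInd (hM : MeasurableSet M) : Measurable (outInd M) :=
  measurable_const.indicator hM.compl

lemma outInd_nonneg (y : S) : 0 ≤ outInd M y :=
  Set.indicator_nonneg (fun _ _ => zero_le_one) y

lemma outInd_le_one (y : S) : outInd M y ≤ 1 := by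
  classical
  unfold outInd; rw [Set.indicator_apply]; split <;> norm_num

lemma outInd_of_mem {y : S} (h : y ∈ M) : outInd M y = 0 := by
  simp [outInd, Set.indicator_apply, h]

lemma outInd_of_not_mem {y : S} (h : y ∉ M) : outInd M y = 1 := by
  simp [outInd, Set.indicator_apply, h]

lemma stayInd_succ (n : ℕ) (ω : ℕ → S) :
    stayInd M (n + 1) ω = outInd M (ω 1) * stayInd M n (shift 1 ω) := by
  classical
  unfold stayInd outInd
  rw [Set.indicator_apply, Set.indicator_apply, Set.indicator_apply]
  by_cases h1 : ω 1 ∈ M <;> by_cases h2 : shift 1 ω ∈ staySet M n <;>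
    simp [mem_staySet_succ_iff, h1, h2]

section RetTime

lemma retTime_eq_zero_iff (ω : ℕ → S) :
    retTime M ω = 0 ↔ ∀ k, 1 ≤ k → ω k ∉ M := by
  unfold retTime
  rw [Nat.sInf_eq_zero]
  constructor
  · rintro (⟨h0, _⟩ | he)
    · omega
    · intro k hk hkM
      exact absurd (Set.eq_empty_iff_forall_notMem.mp he k) (by simp [hk, hkM])
  · intro h
    right
    ext k; simp only [Set.mem_setOf_eq, Set.mem_empty_iff_false, iff_false, not_and]
    exact fun hk => h k hk

lemma mem_staySet_iff_retTime (n : ℕ) (ω : ℕ → S) :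
    ω ∈ staySet M n ↔ (retTime M ω = 0 ∨ n < retTime M ω) := by
  constructor
  · intro h
    by_cases hz : retTime M ω = 0
    · exact Or.inl hz
    · right
      have hne : {m | 1 ≤ m ∧ ω m ∈ M}.Nonempty := by
        by_contra hne
        rw [Set.not_nonempty_iff_eq_empty] at hne
        exact hz (by unfold retTime; rw [hne]; simp)
      have hmem := Nat.sInf_mem hne
      by_contra hle
      push_neg at hle
      exact h _ hmem.1 (by exact le_trans hle le_rfl) hmem.2
  · rintro (hz | hlt) k hk hk'
    · exact (retTime_eq_zero_iff ω).mp hz k hk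
    · intro hkM
      have : retTime M ω ≤ k := Nat.sInf_le ⟨hk, hkM⟩
      omega

lemma retTime_shift_zero (n : ℕ) (ω : ℕ → S) (h : ω ∈ staySet M n)
    (h0 : retTime M (shift n ω) = 0) : retTime M ω = 0 := by
  rw [retTime_eq_zero_iff] at h0 ⊢
  intro k hk
  by_cases hkn : k ≤ n
  · exact h k hk hkn
  · have := h0 (k - n) (by omega)
    simpa [shift, Nat.sub_add_cancel (by omega : n ≤ k)] using this

lemma retTime_shift (n : ℕ) (ω : ℕ → S) (h : ω ∈ staySet M n)
    (h1 : 1 ≤ retTime M (shift n ω)) : retTime M ω = n + retTime M (shift n ω) := by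
  set m := retTime M (shift n ω) with hm
  have hne : {j | 1 ≤ j ∧ (shift n ω) j ∈ M}.Nonempty := by
    by_contra hne
    rw [Set.not_nonempty_iff_eq_empty] at hne
    have : retTime M (shift n ω) = 0 := by unfold retTime; rw [hne]; simp
    omega
  have hmem := Nat.sInf_mem hne
  have hmm : (shift n ω) m ∈ M := hmem.2
  have hnm : ω (n + m) ∈ M := by simpa [shift, Nat.add_comm] using hmm
  refine le_antisymm (Nat.sInf_le ⟨by omega, hnm⟩) ?_
  refine le_csInf ⟨n + m, by omega, hnm⟩ ?_
  rintro j ⟨hj1, hjM⟩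
  have hjn : n < j := by
    by_contra hle
    exact h j hj1 (by omega) hjM
  have : m ≤ j - n := Nat.sInf_le ⟨by omega, by
    simpa [shift, Nat.sub_add_cancel (by omega : n ≤ j)] using hjM⟩
  omega

lemma staySet_of_lt_retTime {n : ℕ} {ω : ℕ → S} (h : n < retTime M ω) :
    ω ∈ staySet M n := (mem_staySet_iff_retTime n ω).mpr (Or.inr h)

lemma measurable_retTime (hM : MeasurableSet M) : Measurable (retTime M) := by
  have key : ∀ c : ℕ, MeasurableSet {ω : ℕ → S | retTime M ω = c} := by
    intro c
    rcases Nat.eq_zero_or_pos c with rfl | hc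
    · have : {ω : ℕ → S | retTime M ω = 0} =
        ⋂ (k : ℕ) (_ : 1 ≤ k), (fun ω : ℕ → S => ω k) ⁻¹' Mᶜ := by
        ext ω; simp [retTime_eq_zero_iff]
      rw [this]
      exact MeasurableSet.iInter fun k => MeasurableSet.iInter fun _ =>
        (measurable_pi_apply k) hM.compl
    · have : {ω : ℕ → S | retTime M ω = c} =
        ((fun ω : ℕ → S => ω c) ⁻¹' M) ∩ staySet M (c - 1) := by
        ext ω
        simp only [Set.mem_setOf_eq, Set.mem_inter_iff, Set.mem_preimage]
        constructor
        · rintro rfl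
          have hne : {j | 1 ≤ j ∧ ω j ∈ M}.Nonempty := by
            by_contra hne
            rw [Set.not_nonempty_iff_eq_empty] at hne
            have : retTime M ω = 0 := by unfold retTime; rw [hne]; simp
            omega
          have hmem := Nat.sInf_mem hne
          exact ⟨hmem.2, staySet_of_lt_retTime (by omega)⟩
        · rintro ⟨hc', hstay⟩
          have h1 : retTime M ω ≤ c := Nat.sInf_le ⟨hc, hc'⟩
          rcases (mem_staySet_iff_retTime _ _).mp hstay with hz | hlt
          · exact absurd hc' ((retTime_eq_zero_iff ω).mp hz c hc)
          · omega
      rw [this]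
      exact ((measurable_pi_apply c) hM).inter (measurableSet_staySet hM _)
  exact measurable_to_countable' fun c => key c

lemma measurable_eval_retTime (hM : MeasurableSet M) :
    Measurable (fun ω : ℕ → S => ω (retTime M ω)) := by
  intro t ht
  have : (fun ω : ℕ → S => ω (retTime M ω)) ⁻¹' t =
      ⋃ (n : ℕ), ({ω : ℕ → S | retTime M ω = n} ∩ (fun ω : ℕ → S => ω n) ⁻¹' t) := by
    ext ω
    simp only [Set.mem_preimage, Set.mem_iUnion, Set.mem_inter_iff, Set.mem_setOf_eq]
    constructor
    · intro h; exact ⟨retTime M ω, rfl, h⟩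
    · rintro ⟨n, rfl, h⟩; exact h
  rw [this]
  exact MeasurableSet.iUnion fun n =>
    ((measurable_retTime hM) (MeasurableSet.singleton n)).inter ((measurable_pi_apply n) ht)

end RetTime

section Kernel
variable [MeasurableSingletonClass S] (P : Kernel S (ℕ → S)) [IsMarkovKernel P]

lemma integrable_bdd {g : (ℕ → S) → ℝ} (hg : Measurable g) {C : ℝ}
    (hb : ∀ ω, |g ω| ≤ C) (x : S) : Integrable g (P x) :=
  (integrable_const C).mono' hg.aestronglyMeasurable
    (ae_of_all _ (by simpa [Real.norm_eq_abs] using hb))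

lemma measurable_kernel_integral {g : (ℕ → S) → ℝ} (hg : Measurable g) :
    Measurable fun y => ∫ ρ, g ρ ∂(P y) := by
  have h : StronglyMeasurable fun p : S × (ℕ → S) => g p.2 :=
    (hg.comp measurable_snd).stronglyMeasurable
  exact h.integral_kernel_prod_right'.measurable

lemma ae_start (hStart : ∀ x : S, P x {ω | ω 0 = x} = 1) (x : S) :
    ∀ᵐ ω ∂(P x), ω 0 = x := by
  have hs : MeasurableSet {ω : ℕ → S | ω 0 = x} := by
    show MeasurableSet ((fun ω : ℕ → S => ω 0) ⁻¹' {x})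
    exact (measurable_pi_apply 0) (measurableSet_singleton x)
  rw [ae_iff]
  have he : {ω : ℕ → S | ¬ ω 0 = x} = {ω : ℕ → S | ω 0 = x}ᶜ := rfl
  rw [he, measure_compl hs (measure_ne_top _ _), hStart x, measure_univ]
  simp

variable {P}

lemma step (hM : MeasurableSet M)
    (hStart : ∀ x : S, P x {ω | ω 0 = x} = 1)
    (hMarkov : ∀ (x : S) (F : (ℕ → S) → ℝ), Measurable F → (∃ C, ∀ ω, |F ω| ≤ C) →
      ∫ ω, F (fun n => ω (n + 1)) ∂(P x) = ∫ ω, (∫ ω', F ω' ∂(P (ω 1))) ∂(P x))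
    {g : (ℕ → S) → ℝ} (hg : Measurable g) {C : ℝ} (hbC : ∀ ρ, |g ρ| ≤ C)
    (n : ℕ) (x : S) :
    ∫ ω, stayInd M (n+1) ω * g (shift (n+1) ω) ∂(P x)
      = ∫ ω, outInd M (ω 1) * ∫ ρ, stayInd M n ρ * g (shift n ρ) ∂(P (ω 1)) ∂(P x) := by
  classical
  set F : (ℕ → S) → ℝ := fun ρ => outInd M (ρ 0) * (stayInd M n ρ * g (shift n ρ)) with hF
  have hFmeas : Measurable F := ((measurable_outInd hM).comp (measurable_pi_apply 0)).mul
    (((measurable_stayInd hM n)).mul (hg.comp (measurable_shift n)))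
  have hFb : ∃ C', ∀ ρ, |F ρ| ≤ C' := by
    refine ⟨C, fun ρ => ?_⟩
    have h0 : (0:ℝ) ≤ C := le_trans (abs_nonneg _) (hbC ρ)
    have h1 : |outInd M (ρ 0)| ≤ 1 :=
      abs_le.mpr ⟨by linarith [outInd_nonneg (M := M) (ρ 0)], outInd_le_one _⟩
    have h2 : |stayInd M n ρ| ≤ 1 :=
      abs_le.mpr ⟨by linarith [stayInd_nonneg (M := M) n ρ], stayInd_le_one _ _⟩
    have h3 := hbC (shift n ρ)
    refine le_trans (le_of_eq (by rw [hF, abs_mul, abs_mul])) ?_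
    have m1 : |stayInd M n ρ| * |g (shift n ρ)| ≤ 1 * C :=
      mul_le_mul h2 h3 (abs_nonneg _) zero_le_one
    have m2 : |outInd M (ρ 0)| * (|stayInd M n ρ| * |g (shift n ρ)|) ≤ 1 * (1 * C) :=
      mul_le_mul h1 m1 (by positivity) zero_le_one
    linarith
  have key : ∀ ω : ℕ → S, stayInd M (n+1) ω * g (shift (n+1) ω) = F (fun k => ω (k+1)) := by
    intro ω
    show _ = F (shift 1 ω)
    have e1 : shift n (shift 1 ω) = shift (n+1) ω := shift_shift n 1 ω
    have e2 : (shift 1 ω) 0 = ω 1 := rfl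
    simp only [hF]
    rw [stayInd_succ, e1, e2]
    ring
  calc ∫ ω, stayInd M (n+1) ω * g (shift (n+1) ω) ∂(P x)
      = ∫ ω, F (fun k => ω (k+1)) ∂(P x) := by
        exact integral_congr_ae (ae_of_all _ key)
    _ = ∫ ω, (∫ ρ, F ρ ∂(P (ω 1))) ∂(P x) := hMarkov x F hFmeas hFb
    _ = ∫ ω, outInd M (ω 1) * ∫ ρ, stayInd M n ρ * g (shift n ρ) ∂(P (ω 1)) ∂(P x) := by
        refine integral_congr_ae (ae_of_all _ fun ω => ?_)
        calc ∫ ρ, F ρ ∂(P (ω 1))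
            = ∫ ρ, outInd M (ω 1) * (stayInd M n ρ * g (shift n ρ)) ∂(P (ω 1)) := by
              refine integral_congr_ae ?_
              filter_upwards [ae_start P hStart (ω 1)] with ρ hρ
              simp only [hF]
              rw [hρ]
          _ = outInd M (ω 1) * ∫ ρ, stayInd M n ρ * g (shift n ρ) ∂(P (ω 1)) :=
              integral_const_mul _ _

end Kernel

section Main
set_option linter.unusedSectionVars false
variable [MeasurableSingletonClass S] {P : Kernel S (ℕ → S)} [IsMarkovKernel P]
variable (hM : MeasurableSet M)
    (hStart : ∀ x : S, P x {ω | ω 0 = x} = 1)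
    (hMarkov : ∀ (x : S) (F : (ℕ → S) → ℝ), Measurable F → (∃ C, ∀ ω, |F ω| ≤ C) →
      ∫ ω, F (fun n => ω (n + 1)) ∂(P x) = ∫ ω, (∫ ω', F ω' ∂(P (ω 1))) ∂(P x))

lemma abs_stayInd_le (n : ℕ) (ω : ℕ → S) : |stayInd M n ω| ≤ 1 :=
  abs_le.mpr ⟨by linarith [stayInd_nonneg (M := M) n ω], stayInd_le_one n ω⟩

include hM in
lemma integral_stayInd (n : ℕ) (x : S) :
    ∫ ω, stayInd M n ω ∂(P x) = ((P x) (staySet M n)).toReal := by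
  unfold stayInd
  exact integral_indicator_one (measurableSet_staySet hM n)

lemma integral_stayInd_nonneg (n : ℕ) (x : S) : 0 ≤ ∫ ω, stayInd M n ω ∂(P x) :=
  integral_nonneg (stayInd_nonneg n)

include hM in
lemma integral_stayInd_le_one (n : ℕ) (x : S) : ∫ ω, stayInd M n ω ∂(P x) ≤ 1 := by
  have h := integral_mono (μ := P x)
    (integrable_bdd P (measurable_stayInd hM n) (abs_stayInd_le n) x)
    (integrable_const 1) (stayInd_le_one n)
  simpa using h

include hM in
lemma integral_outInd (y : S) :
    ∫ ω, outInd M (ω 1) ∂(P y) = ((P y) {ω | ω 1 ∉ M}).toReal := by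
  have he : (fun ω : ℕ → S => outInd M (ω 1)) =
      Set.indicator {ω : ℕ → S | ω 1 ∉ M} 1 := by
    classical
    ext ω
    by_cases h : ω 1 ∈ M <;>
      simp [outInd, Set.indicator_apply, h]
  have hms : MeasurableSet {ω : ℕ → S | ω 1 ∉ M} := by
    show MeasurableSet ((fun ω : ℕ → S => ω 1) ⁻¹' Mᶜ)
    exact (measurable_pi_apply 1) hM.compl
  rw [he]
  exact integral_indicator_one hms

include hM hStart hMarkov

lemma peel_step {g : (ℕ → S) → ℝ} (hg : Measurable g) {C : ℝ} (hg0 : ∀ ρ, 0 ≤ g ρ)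
    (hgC : ∀ ρ, g ρ ≤ C) {t : ℝ} (ht : 0 ≤ t) (n : ℕ)
    (IH : ∀ y, y ∉ M → ∫ ω, stayInd M n ω * g (shift n ω) ∂(P y)
        ≤ t * ∫ ω, stayInd M n ω ∂(P y)) :
    ∀ x, ∫ ω, stayInd M (n+1) ω * g (shift (n+1) ω) ∂(P x)
        ≤ t * ∫ ω, stayInd M (n+1) ω ∂(P x) := by
  intro x
  have habs : ∀ ρ, |g ρ| ≤ C := fun ρ => abs_le.mpr ⟨by linarith [hg0 ρ, hgC ρ], hgC ρ⟩
  have h1 := step hM hStart hMarkov hg habs n x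
  have hone : ∀ ρ : ℕ → S, |(1:ℝ)| ≤ 1 := fun _ => by norm_num
  have h2 := step hM hStart hMarkov (measurable_const (a := (1:ℝ))) hone n x
  simp only [mul_one] at h2
  rw [h1, h2, ← integral_const_mul]
  refine integral_mono_of_nonneg (ae_of_all _ fun ω => ?_) ?_ (ae_of_all _ fun ω => ?_)
  · exact mul_nonneg (outInd_nonneg _)
      (integral_nonneg fun ρ => mul_nonneg (stayInd_nonneg _ _) (hg0 _))
  · refine integrable_bdd P ?_ (C := t) (fun ω => ?_) x
    · exact measurable_const.mul (((measurable_outInd hM).comp (measurable_pi_apply 1)).mul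
        ((measurable_kernel_integral P (measurable_stayInd hM n)).comp (measurable_pi_apply 1)))
    · rw [abs_mul, abs_of_nonneg ht, abs_mul]
      have i1 : |outInd M (ω 1)| ≤ 1 :=
        abs_le.mpr ⟨by linarith [outInd_nonneg (M := M) (ω 1)], outInd_le_one _⟩
      have i2 : |∫ ρ, stayInd M n ρ ∂(P (ω 1))| ≤ 1 :=
        abs_le.mpr ⟨by linarith [integral_stayInd_nonneg (M := M) (P := P) n (ω 1)],
          integral_stayInd_le_one hM n (ω 1)⟩
      have : |outInd M (ω 1)| * |∫ ρ, stayInd M n ρ ∂(P (ω 1))| ≤ 1 * 1 :=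
        mul_le_mul i1 i2 (abs_nonneg _) zero_le_one
      nlinarith
  · dsimp only
    by_cases hω : ω 1 ∈ M
    · simp [outInd_of_mem hω]
    · rw [outInd_of_not_mem hω]
      simp only [one_mul]
      exact IH _ hω

lemma peel {g : (ℕ → S) → ℝ} (hg : Measurable g) {C : ℝ} (hg0 : ∀ ρ, 0 ≤ g ρ)
    (hgC : ∀ ρ, g ρ ≤ C) {t : ℝ} (ht : 0 ≤ t)
    (hle : ∀ y, y ∉ M → ∫ ρ, g ρ ∂(P y) ≤ t) :
    ∀ (n : ℕ) (x : S), 1 ≤ n → ∫ ω, stayInd M n ω * g (shift n ω) ∂(P x)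
        ≤ t * ∫ ω, stayInd M n ω ∂(P x) := by
  have base : ∀ n : ℕ, ∀ y, y ∉ M → ∫ ω, stayInd M n ω * g (shift n ω) ∂(P y)
      ≤ t * ∫ ω, stayInd M n ω ∂(P y) := by
    intro n
    induction n with
    | zero =>
      intro y hy
      have hsz : ∀ ω : ℕ → S, shift 0 ω = ω := fun ω => rfl
      simp only [stayInd_zero, one_mul, hsz]
      have : ∫ (_ : ℕ → S), (1:ℝ) ∂(P y) = 1 := by simp
      rw [this, mul_one]
      exact hle y hy
    | succ n IH => exact fun y _ => peel_step hM hStart hMarkov hg hg0 hgC ht n IH y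
  intro n x hn
  obtain ⟨m, rfl⟩ : ∃ m, n = m + 1 := ⟨n - 1, by omega⟩
  exact peel_step hM hStart hMarkov hg hg0 hgC ht m (base m) x

lemma tail_bound {q : ℝ} (hq0 : 0 ≤ q)
    (hq : ∀ y ∉ M, ((P y) {ω | ω 1 ∉ M}).toReal ≤ q) :
    ∀ n : ℕ, (∀ y, y ∉ M → ∫ ω, stayInd M n ω ∂(P y) ≤ q ^ n)
      ∧ ∀ x, ∫ ω, stayInd M (n+1) ω ∂(P x) ≤ q ^ n := by
  have hone : ∀ ρ : ℕ → S, |(1:ℝ)| ≤ 1 := fun _ => by norm_num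
  have hstep : ∀ (n : ℕ) (x : S), ∫ ω, stayInd M (n+1) ω ∂(P x)
      = ∫ ω, outInd M (ω 1) * ∫ ρ, stayInd M n ρ ∂(P (ω 1)) ∂(P x) := by
    intro n x
    have h := step hM hStart hMarkov (measurable_const (a := (1:ℝ))) hone n x
    simpa [mul_one] using h
  have hpart2 : ∀ n : ℕ, (∀ y, y ∉ M → ∫ ω, stayInd M n ω ∂(P y) ≤ q ^ n) →
      ∀ x, ∫ ω, stayInd M (n+1) ω ∂(P x) ≤ q ^ n := by
    intro n IH x
    rw [hstep n x]
    calc ∫ ω, outInd M (ω 1) * ∫ ρ, stayInd M n ρ ∂(P (ω 1)) ∂(P x)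
        ≤ ∫ (_ : ℕ → S), q ^ n ∂(P x) := by
          refine integral_mono_of_nonneg
            (ae_of_all _ fun ω => mul_nonneg (outInd_nonneg _)
              (integral_stayInd_nonneg n _))
            (integrable_const _) (ae_of_all _ fun ω => ?_)
          dsimp only
          by_cases hω : ω 1 ∈ M
          · rw [outInd_of_mem hω, zero_mul]; positivity
          · rw [outInd_of_not_mem hω, one_mul]; exact IH _ hω
      _ = q ^ n := by simp
  have hpart1 : ∀ n : ℕ, ∀ y, y ∉ M → ∫ ω, stayInd M n ω ∂(P y) ≤ q ^ n := by
    intro n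
    induction n with
    | zero =>
      intro y hy
      simp only [stayInd_zero, pow_zero]
      simp
    | succ n IH =>
      intro y hy
      rw [hstep n y]
      calc ∫ ω, outInd M (ω 1) * ∫ ρ, stayInd M n ρ ∂(P (ω 1)) ∂(P y)
          ≤ ∫ ω, outInd M (ω 1) * q ^ n ∂(P y) := by
            refine integral_mono_of_nonneg
              (ae_of_all _ fun ω => mul_nonneg (outInd_nonneg _)
                (integral_stayInd_nonneg n _))
              ?_ (ae_of_all _ fun ω => ?_)
            · have hm : Measurable fun ω : ℕ → S => outInd M (ω 1) * q ^ n :=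
                ((measurable_outInd hM).comp (measurable_pi_apply 1)).mul measurable_const
              refine integrable_bdd P hm (C := q ^ n) (fun ω => ?_) y
              rw [abs_mul, abs_of_nonneg (by positivity : (0:ℝ) ≤ q ^ n)]
              have i1 : |outInd M (ω 1)| ≤ 1 :=
                abs_le.mpr ⟨by linarith [outInd_nonneg (M := M) (ω 1)], outInd_le_one _⟩
              nlinarith [abs_nonneg (outInd M (ω 1)), pow_nonneg hq0 n]
            · dsimp only
              by_cases hω : ω 1 ∈ M
              · rw [outInd_of_mem hω, zero_mul, zero_mul]
              · rw [outInd_of_not_mem hω, one_mul, one_mul]; exact IH _ hω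
        _ = (∫ ω, outInd M (ω 1) ∂(P y)) * q ^ n := integral_mul_const _ _
        _ ≤ q * q ^ n := by
            rw [integral_outInd hM]
            exact mul_le_mul_of_nonneg_right (hq y hy) (by positivity)
        _ = q ^ (n + 1) := by ring
  exact fun n => ⟨hpart1 n, hpart2 n (hpart1 n)⟩

lemma ae_retTime_pos {q : ℝ} (hq0 : 0 ≤ q) (hq1 : q < 1)
    (hq : ∀ y ∉ M, ((P y) {ω | ω 1 ∉ M}).toReal ≤ q) (x : S) :
    ∀ᵐ ω ∂(P x), 1 ≤ retTime M ω := by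
  have hsub : ∀ n : ℕ, {ω : ℕ → S | retTime M ω = 0} ⊆ staySet M n := by
    intro n ω hω k hk _
    exact (retTime_eq_zero_iff ω).mp hω k hk
  have hb : ∀ n : ℕ, ((P x) {ω | retTime M ω = 0}).toReal ≤ q ^ n := by
    intro n
    have h1 : (P x) {ω | retTime M ω = 0} ≤ (P x) (staySet M (n+1)) :=
      measure_mono (hsub (n+1))
    have h2 := (tail_bound hM hStart hMarkov hq0 hq n).2 x
    rw [integral_stayInd hM] at h2
    exact le_trans (ENNReal.toReal_mono (measure_ne_top _ _) h1) h2
  have hlim : Filter.Tendsto (fun n : ℕ => q ^ n) Filter.atTop (nhds 0) :=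
    tendsto_pow_atTop_nhds_zero_of_lt_one hq0 hq1
  have h0 : ((P x) {ω | retTime M ω = 0}).toReal ≤ 0 :=
    le_of_tendsto_of_tendsto' tendsto_const_nhds hlim hb
  have h0' : (P x) {ω | retTime M ω = 0} = 0 := by
    have hnn := ENNReal.toReal_nonneg (a := (P x) {ω | retTime M ω = 0})
    have heq : ((P x) {ω | retTime M ω = 0}).toReal = 0 := le_antisymm h0 hnn
    rcases (ENNReal.toReal_eq_zero_iff _).mp heq with h | h
    · exact h
    · exact absurd h (measure_ne_top _ _)
  rw [ae_iff]
  have he : {ω : ℕ → S | ¬ 1 ≤ retTime M ω} = {ω | retTime M ω = 0} := by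
    ext ω; simp [Nat.lt_one_iff, not_le]
  rw [he]
  exact h0'

set_option maxHeartbeats 1000000 in
lemma integrable_retTime {q : ℝ} (hq0 : 0 ≤ q) (hq1 : q < 1)
    (hq : ∀ y ∉ M, ((P y) {ω | ω 1 ∉ M}).toReal ≤ q) (x : S) :
    Integrable (fun ω => (retTime M ω : ℝ)) (P x) := by
  have hmeasn : Measurable (retTime M) := measurable_retTime hM
  have hmeas : Measurable fun ω : ℕ → S => (retTime M ω : ℝ) :=
    (measurable_from_top (f := fun n : ℕ => (n : ℝ))).comp hmeasn
  have hsets : ∀ n : ℕ, MeasurableSet {ρ : ℕ → S | n < retTime M ρ} := by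
    intro n
    show MeasurableSet (retTime M ⁻¹' (Set.Ioi n))
    exact hmeasn measurableSet_Ioi
  have key : ∀ ω : ℕ → S, ((retTime M ω : ℕ) : ℝ≥0∞)
      = ∑' n : ℕ, Set.indicator {ρ : ℕ → S | n < retTime M ρ} (fun _ => (1:ℝ≥0∞)) ω := by
    intro ω
    classical
    have h1 : ∑' n : ℕ, Set.indicator {ρ : ℕ → S | n < retTime M ρ} (fun _ => (1:ℝ≥0∞)) ω
        = ∑ n ∈ Finset.range (retTime M ω),
            Set.indicator {ρ : ℕ → S | n < retTime M ρ} (fun _ => (1:ℝ≥0∞)) ω :=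
      tsum_eq_sum (fun n hn => by
        rw [Finset.mem_range, not_lt] at hn
        exact Set.indicator_of_notMem (by simpa using hn) _)
    rw [h1]
    have h2 : ∀ n ∈ Finset.range (retTime M ω),
        Set.indicator {ρ : ℕ → S | n < retTime M ρ} (fun _ => (1:ℝ≥0∞)) ω = 1 := fun n hn =>
      Set.indicator_of_mem (by simpa using Finset.mem_range.mp hn) _
    rw [Finset.sum_congr rfl h2, Finset.sum_const, Finset.card_range, nsmul_eq_mul, mul_one]
  have hlin : ∫⁻ ω, ((retTime M ω : ℕ) : ℝ≥0∞) ∂(P x)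
      = ∑' n : ℕ, (P x) {ρ : ℕ → S | n < retTime M ρ} := by
    rw [lintegral_congr key, lintegral_tsum (fun n =>
      ((measurable_const.indicator (hsets n)).aemeasurable))]
    congr 1
    funext n
    exact lintegral_indicator_one (hsets n)
  have hfin : ∑' n : ℕ, (P x) {ρ : ℕ → S | n < retTime M ρ} < ⊤ := by
    have hterm0 : (P x) {ρ : ℕ → S | 0 < retTime M ρ} ≤ 1 := prob_le_one
    have hterm : ∀ m : ℕ, (P x) {ρ : ℕ → S | (m+1) < retTime M ρ} ≤ (ENNReal.ofReal q) ^ m := by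
      intro m
      have hs : {ρ : ℕ → S | (m+1) < retTime M ρ} ⊆ staySet M (m+1) :=
        fun ρ hρ => staySet_of_lt_retTime hρ
      have h2 := (tail_bound hM hStart hMarkov hq0 hq m).2 x
      rw [integral_stayInd hM] at h2
      calc (P x) {ρ : ℕ → S | (m+1) < retTime M ρ} ≤ (P x) (staySet M (m+1)) := measure_mono hs
        _ ≤ ENNReal.ofReal (q ^ m) :=
            (ENNReal.le_ofReal_iff_toReal_le (measure_ne_top _ _) (by positivity)).mpr h2
        _ = (ENNReal.ofReal q) ^ m := by rw [ENNReal.ofReal_pow hq0]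
    have hsplit := tsum_eq_zero_add' (f := fun n : ℕ => (P x) {ρ : ℕ → S | n < retTime M ρ})
      ENNReal.summable
    calc ∑' n : ℕ, (P x) {ρ : ℕ → S | n < retTime M ρ}
        = (P x) {ρ : ℕ → S | 0 < retTime M ρ}
          + ∑' m : ℕ, (P x) {ρ : ℕ → S | (m+1) < retTime M ρ} := hsplit
      _ ≤ 1 + ∑' m : ℕ, (ENNReal.ofReal q) ^ m := by
          exact add_le_add hterm0 (ENNReal.tsum_le_tsum hterm)
      _ = 1 + (1 - ENNReal.ofReal q)⁻¹ := by rw [ENNReal.tsum_geometric]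
      _ < ⊤ := by
          rw [ENNReal.add_lt_top]
          constructor
          · exact ENNReal.one_lt_top
          · rw [ENNReal.inv_lt_top]
            rw [tsub_pos_iff_lt]
            exact ENNReal.ofReal_lt_one.mpr hq1
  refine ⟨hmeas.aestronglyMeasurable, ?_⟩
  show (∫⁻ ω, ‖(retTime M ω : ℝ)‖₊ ∂(P x)) < ⊤
  have hnn : ∀ ω : ℕ → S, (‖((retTime M ω : ℕ) : ℝ)‖₊ : ℝ≥0∞) = ((retTime M ω : ℕ) : ℝ≥0∞) := by
    intro ω
    rw [Real.nnnorm_natCast]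
    simp
  rw [lintegral_congr hnn, hlin]
  exact hfin

end Main

section ExpAlg
variable {u : ℝ}

lemma exp_tele (m : ℕ) : Real.exp (u * m) - 1
    = (1 - Real.exp (-u)) * ∑ k ∈ Finset.range m, Real.exp (u * ((m - k : ℕ) : ℝ)) := by
  induction m with
  | zero => simp
  | succ m IH =>
    have hδ : (1 - Real.exp (-u)) * Real.exp u = Real.exp u - 1 := by
      rw [Real.exp_neg]
      field_simp
    have hsum : ∑ k ∈ Finset.range (m+1), Real.exp (u * (((m+1) - k : ℕ) : ℝ))
        = Real.exp u * (∑ k ∈ Finset.range m, Real.exp (u * ((m - k : ℕ) : ℝ)))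
          + Real.exp u := by
      rw [Finset.sum_range_succ]
      have h1 : ∀ k ∈ Finset.range m, Real.exp (u * (((m+1) - k : ℕ) : ℝ))
          = Real.exp u * Real.exp (u * ((m - k : ℕ) : ℝ)) := by
        intro k hk
        have hk' := Finset.mem_range.mp hk
        have hc : ((m + 1 - k : ℕ) : ℝ) = ((m - k : ℕ) : ℝ) + 1 := by
          have h : m + 1 - k = (m - k) + 1 := by omega
          rw [h]; push_cast; ring
        rw [hc, mul_add, mul_one, Real.exp_add]
        ring
      rw [Finset.sum_congr rfl h1, ← Finset.mul_sum]
      have h2 : m + 1 - m = 1 := by omega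
      rw [h2]
      norm_num
    have hL : Real.exp (u * ((m+1 : ℕ) : ℝ)) - 1
        = Real.exp u * (Real.exp (u * (m : ℝ)) - 1) + (Real.exp u - 1) := by
      push_cast
      rw [mul_add, mul_one, Real.exp_add]
      ring
    push_cast at hL hsum ⊢
    rw [hL, IH, hsum, ← hδ]
    ring

lemma exp_decomp (m R : ℕ) (hmR : m ≤ R) :
    Real.exp (u * m) - 1 = (1 - Real.exp (-u)) * m
      + (1 - Real.exp (-u)) * ∑ k ∈ Finset.range R,
          (if k < m then Real.exp (u * ((m - k : ℕ) : ℝ)) - 1 else 0) := by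
  classical
  have h2 : ∑ k ∈ Finset.range R,
      (if k < m then Real.exp (u * ((m - k : ℕ) : ℝ)) - 1 else 0)
      = ∑ k ∈ Finset.range m, (Real.exp (u * ((m - k : ℕ) : ℝ)) - 1) := by
    rw [← Finset.sum_subset (Finset.range_subset_range.mpr hmR)
      (fun k _ hk => if_neg (by simpa using hk))]
    exact Finset.sum_congr rfl fun k hk => if_pos (Finset.mem_range.mp hk)
  have h3 : ∑ k ∈ Finset.range m, (Real.exp (u * ((m - k : ℕ) : ℝ)) - 1)
      = (∑ k ∈ Finset.range m, Real.exp (u * ((m - k : ℕ) : ℝ))) - m := by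
    rw [Finset.sum_sub_distrib, Finset.sum_const, Finset.card_range]
    simp [nsmul_eq_mul]
  rw [h2, h3, exp_tele m]
  ring

end ExpAlg

/-- capped exponential weight -/
noncomputable def Gcap (M : Set S) (u : ℝ) (K : ℕ) (ρ : ℕ → S) : ℝ :=
  Real.exp (u * ((min (retTime M ρ) K : ℕ) : ℝ)) - 1

section GcapFacts
variable {M : Set S} {u : ℝ}

lemma measurable_Gcap (hM : MeasurableSet M) (K : ℕ) : Measurable (Gcap M u K) :=
  (measurable_from_top
    (f := fun m : ℕ => Real.exp (u * ((min m K : ℕ) : ℝ)) - 1)).comp (measurable_retTime hM)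

lemma Gcap_nonneg (hu : 0 ≤ u) (K : ℕ) (ρ : ℕ → S) : 0 ≤ Gcap M u K ρ := by
  unfold Gcap
  have : (1:ℝ) ≤ Real.exp (u * ((min (retTime M ρ) K : ℕ) : ℝ)) :=
    Real.one_le_exp (by positivity)
  linarith

lemma Gcap_le (hu : 0 ≤ u) (K : ℕ) (ρ : ℕ → S) : Gcap M u K ρ ≤ Real.exp (u * K) := by
  unfold Gcap
  have h1 : Real.exp (u * ((min (retTime M ρ) K : ℕ) : ℝ)) ≤ Real.exp (u * K) := by
    apply Real.exp_le_exp.mpr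
    apply mul_le_mul_of_nonneg_left _ hu
    exact_mod_cast Nat.cast_le.mpr (min_le_right _ _)
  linarith

end GcapFacts

section Core
set_option linter.unusedSectionVars false
variable [MeasurableSingletonClass S] {P : Kernel S (ℕ → S)} [IsMarkovKernel P]
variable (hM : MeasurableSet M)
    (hStart : ∀ x : S, P x {ω | ω 0 = x} = 1)
    (hMarkov : ∀ (x : S) (F : (ℕ → S) → ℝ), Measurable F → (∃ C, ∀ ω, |F ω| ≤ C) →
      ∫ ω, F (fun n => ω (n + 1)) ∂(P x) = ∫ ω, (∫ ω', F ω' ∂(P (ω 1))) ∂(P x))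
    {u q : ℝ} (hu : 0 ≤ u) (hq0 : 0 ≤ q) (hq1 : q < 1)
    (hq : ∀ y ∉ M, ((P y) {ω | ω 1 ∉ M}).toReal ≤ q)

/-- pointwise count bound -/
lemma sum_stayInd_le (R : ℕ) (ω : ℕ → S) (hτ : 1 ≤ retTime M ω) :
    ∑ k ∈ Finset.range R, stayInd M (k+1) ω ≤ (retTime M ω : ℝ) - 1 := by
  classical
  have h1 : ∀ k ∈ Finset.range R,
      stayInd M (k+1) ω ≤ (if k + 1 < retTime M ω then (1:ℝ) else 0) := by
    intro k _
    by_cases hst : ω ∈ staySet M (k+1)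
    · have : k + 1 < retTime M ω := by
        rcases (mem_staySet_iff_retTime (k+1) ω).mp hst with h0 | h
        · omega
        · exact h
      rw [if_pos this]
      exact stayInd_le_one _ _
    · have : stayInd M (k+1) ω = 0 := Set.indicator_of_notMem hst _
      rw [this]
      split <;> norm_num
  calc ∑ k ∈ Finset.range R, stayInd M (k+1) ω
      ≤ ∑ k ∈ Finset.range R, (if k + 1 < retTime M ω then (1:ℝ) else 0) :=
        Finset.sum_le_sum h1
    _ = (((Finset.range R).filter (fun k => k + 1 < retTime M ω)).card : ℝ) := by
        rw [Finset.sum_boole]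
    _ ≤ (retTime M ω : ℝ) - 1 := by
        have hf : (Finset.range R).filter (fun k => k + 1 < retTime M ω)
            = Finset.range (min R (retTime M ω - 1)) := by
          ext k
          simp only [Finset.mem_filter, Finset.mem_range, lt_min_iff]
          omega
        rw [hf, Finset.card_range]
        have h2 : ((min R (retTime M ω - 1) : ℕ) : ℝ) ≤ ((retTime M ω - 1 : ℕ) : ℝ) :=
          Nat.cast_le.mpr (min_le_right _ _)
        have h3 : ((retTime M ω - 1 : ℕ) : ℝ) = (retTime M ω : ℝ) - 1 := by
          rw [Nat.cast_sub hτ]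
          norm_num
        linarith

include hM hStart hMarkov hu hq0 hq1 hq

lemma ae_term (x : S) (j N : ℕ) (hj : 1 ≤ j) (hjN : j + 1 ≤ N) :
    ∀ᵐ ω ∂(P x), (if j < min (retTime M ω) N
        then Real.exp (u * ((min (retTime M ω) N - j : ℕ) : ℝ)) - 1 else 0)
      = stayInd M j ω * Gcap M u (N - j) (shift j ω) := by
  filter_upwards [ae_retTime_pos hM hStart hMarkov hq0 hq1 hq x] with ω hω
  by_cases hst : ω ∈ staySet M j
  · have hτj : j < retTime M ω := by
      rcases (mem_staySet_iff_retTime j ω).mp hst with h0 | h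
      · omega
      · exact h
    have hs1 : 1 ≤ retTime M (shift j ω) := by
      by_contra h
      have h0 : retTime M (shift j ω) = 0 := by omega
      have := retTime_shift_zero j ω hst h0
      omega
    have heq := retTime_shift j ω hst hs1
    have hind : stayInd M j ω = 1 := by
      unfold stayInd; rw [Set.indicator_of_mem hst]; rfl
    rw [hind, one_mul]
    unfold Gcap
    rw [if_pos (by omega : j < min (retTime M ω) N)]
    have harg : min (retTime M ω) N - j = min (retTime M (shift j ω)) (N - j) := by
      omega
    rw [harg]
  · have hind : stayInd M j ω = 0 := Set.indicator_of_notMem hst _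
    have hτ : retTime M ω ≤ j := by
      rcases Nat.lt_or_ge j (retTime M ω) with h | h
      · exact absurd (staySet_of_lt_retTime h) hst
      · exact h
    rw [if_neg (by omega), hind, zero_mul]

lemma outside_bound {b : ℝ}
    (hb : ∀ y ∉ M, ∫ ω, (retTime M ω : ℝ) ∂(P y) ≤ b)
    (hcond : (1 - Real.exp (-u)) * b < 1) :
    ∀ N : ℕ, ∀ y, y ∉ M → ∫ ω, Gcap M u N ω ∂(P y)
      ≤ (1 - Real.exp (-u)) * b / (1 - (1 - Real.exp (-u)) * b) := by
  classical
  set δ := 1 - Real.exp (-u) with hδdef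
  set tstar := δ * b / (1 - δ * b) with htsdef
  have hδ0 : 0 ≤ δ := by
    have : Real.exp (-u) ≤ 1 := by
      rw [← Real.exp_zero]
      exact Real.exp_le_exp.mpr (by linarith)
    simp only [hδdef]; linarith
  have hδ1 : δ < 1 := by
    have := Real.exp_pos (-u)
    simp only [hδdef]; linarith
  have hd : 0 < 1 - δ * b := by linarith
  intro N
  induction N using Nat.strong_induction_on with
  | _ N IH =>
  intro y hy
  -- b ≥ 1 and tstar ≥ 0
  have hτint := integrable_retTime hM hStart hMarkov hq0 hq1 hq (x := y)
  have hb1 : 1 ≤ b := by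
    have h1 : (1:ℝ) ≤ ∫ ω, (retTime M ω : ℝ) ∂(P y) := by
      have hm := integral_mono_ae (μ := P y) (integrable_const 1) hτint
        (by filter_upwards [ae_retTime_pos hM hStart hMarkov hq0 hq1 hq y] with ω h
            exact_mod_cast h)
      simpa using hm
    linarith [hb y hy]
  have htstar : 0 ≤ tstar := by
    apply div_nonneg _ (le_of_lt hd)
    nlinarith
  rcases Nat.eq_zero_or_pos N with rfl | hN
  · have hz : ∀ ω : ℕ → S, Gcap M u 0 ω = 0 := by
      intro ω; unfold Gcap; simp
    rw [integral_congr_ae (ae_of_all _ hz)]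
    simpa using htstar
  -- N ≥ 1
  set term : ℕ → (ℕ → S) → ℝ := fun k ω =>
    (if k < min (retTime M ω) N
      then Real.exp (u * ((min (retTime M ω) N - k : ℕ) : ℝ)) - 1 else 0) with hterm
  have hterm_meas : ∀ k, Measurable (term k) := by
    intro k
    exact (measurable_from_top (f := fun m : ℕ =>
      (if k < min m N then Real.exp (u * ((min m N - k : ℕ) : ℝ)) - 1 else 0))).comp
      (measurable_retTime hM)
  have hterm_abs : ∀ k ω, |term k ω| ≤ Real.exp (u * N) := by
    intro k ω
    have he1 : (1:ℝ) ≤ Real.exp (u * N) := Real.one_le_exp (by positivity)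
    simp only [hterm]
    split
    · have h2 : Real.exp (u * ((min (retTime M ω) N - k : ℕ) : ℝ)) ≤ Real.exp (u * N) := by
        apply Real.exp_le_exp.mpr
        apply mul_le_mul_of_nonneg_left _ hu
        exact_mod_cast Nat.cast_le.mpr (by omega : min (retTime M ω) N - k ≤ N)
      have h3 : (1:ℝ) ≤ Real.exp (u * ((min (retTime M ω) N - k : ℕ) : ℝ)) :=
        Real.one_le_exp (by positivity)
      rw [abs_le]
      constructor <;> linarith
    · rw [abs_zero]; positivity
  have hterm_int : ∀ k, Integrable (term k) (P y) :=
    fun k => integrable_bdd P (hterm_meas k) (hterm_abs k) y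
  have hmin_meas : Measurable (fun ω : ℕ → S => ((min (retTime M ω) N : ℕ) : ℝ)) :=
    (measurable_from_top (f := fun m : ℕ => ((min m N : ℕ) : ℝ))).comp (measurable_retTime hM)
  have hmin_int : Integrable (fun ω : ℕ → S => ((min (retTime M ω) N : ℕ) : ℝ)) (P y) := by
    refine integrable_bdd P hmin_meas (C := N) (fun ω => ?_) y
    rw [abs_of_nonneg (by positivity)]
    exact_mod_cast Nat.cast_le.mpr (min_le_right _ _)
  have hrw : ∀ ω : ℕ → S, Gcap M u N ω
      = δ * ((min (retTime M ω) N : ℕ) : ℝ)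
        + δ * ∑ k ∈ Finset.range N, term k ω := by
    intro ω
    unfold Gcap
    simp only [hterm]
    exact exp_decomp _ N (min_le_right _ _)
  have hkey : ∫ ω, Gcap M u N ω ∂(P y)
      = δ * ∫ ω, ((min (retTime M ω) N : ℕ) : ℝ) ∂(P y)
        + δ * ∑ k ∈ Finset.range N, ∫ ω, term k ω ∂(P y) := by
    rw [integral_congr_ae (ae_of_all _ hrw), integral_add (hmin_int.const_mul δ)
      ((integrable_finset_sum _ (fun k _ => hterm_int k)).const_mul δ),
      integral_const_mul, integral_const_mul,
      integral_finset_sum _ (fun k _ => hterm_int k)]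
  -- the minimum integral
  have hminb : ∫ ω, ((min (retTime M ω) N : ℕ) : ℝ) ∂(P y) ≤ b := by
    refine le_trans (integral_mono_ae hmin_int hτint (ae_of_all _ fun ω => ?_)) (hb y hy)
    exact_mod_cast Nat.cast_le.mpr (min_le_left _ _)
  -- term 0
  have hterm0 : ∫ ω, term 0 ω ∂(P y) = ∫ ω, Gcap M u N ω ∂(P y) := by
    refine integral_congr_ae ?_
    filter_upwards [ae_retTime_pos hM hStart hMarkov hq0 hq1 hq y] with ω hω
    simp only [hterm]
    rw [if_pos (by omega : 0 < min (retTime M ω) N)]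
    unfold Gcap
    norm_num
  -- terms k+1
  have htermk : ∀ k, k + 1 + 1 ≤ N → ∫ ω, term (k+1) ω ∂(P y)
      ≤ tstar * ∫ ω, stayInd M (k+1) ω ∂(P y) := by
    intro k hk
    have hae := ae_term hM hStart hMarkov hu hq0 hq1 hq y (k+1) N (by omega) hk
    rw [show (∫ ω, term (k+1) ω ∂(P y))
        = ∫ ω, stayInd M (k+1) ω * Gcap M u (N - (k+1)) (shift (k+1) ω) ∂(P y) from
      integral_congr_ae hae]
    exact peel hM hStart hMarkov (measurable_Gcap hM _) (Gcap_nonneg hu _)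
      (Gcap_le hu _) htstar
      (fun z hz => IH (N - (k+1)) (by omega) z hz) (k+1) y (by omega)
  -- combine
  obtain ⟨N', rfl⟩ : ∃ N', N = N' + 1 := ⟨N - 1, by omega⟩
  have hsplit : ∑ k ∈ Finset.range (N' + 1), ∫ ω, term k ω ∂(P y)
      = (∑ k ∈ Finset.range N', ∫ ω, term (k+1) ω ∂(P y)) + ∫ ω, term 0 ω ∂(P y) :=
    Finset.sum_range_succ' _ _
  have hsum_stay : ∑ k ∈ Finset.range N', ∫ ω, stayInd M (k+1) ω ∂(P y) ≤ b - 1 := by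
    rw [← integral_finset_sum _ (fun k _ =>
      integrable_bdd P (measurable_stayInd hM (k+1)) (abs_stayInd_le (k+1)) y)]
    have h1 : ∫ ω, ∑ k ∈ Finset.range N', stayInd M (k+1) ω ∂(P y)
        ≤ ∫ ω, ((retTime M ω : ℝ) - 1) ∂(P y) := by
      refine integral_mono_ae ?_ (hτint.sub (integrable_const 1)) ?_
      · exact integrable_finset_sum _ (fun k _ =>
          integrable_bdd P (measurable_stayInd hM (k+1)) (abs_stayInd_le (k+1)) y)
      · filter_upwards [ae_retTime_pos hM hStart hMarkov hq0 hq1 hq y] with ω hω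
        exact sum_stayInd_le N' ω hω
    have h2 : ∫ ω, ((retTime M ω : ℝ) - 1) ∂(P y) = (∫ ω, (retTime M ω : ℝ) ∂(P y)) - 1 := by
      rw [integral_sub hτint (integrable_const 1)]
      simp
    rw [h2] at h1
    linarith [hb y hy]
  have hsum_terms : ∑ k ∈ Finset.range N', ∫ ω, term (k+1) ω ∂(P y) ≤ tstar * (b - 1) := by
    calc ∑ k ∈ Finset.range N', ∫ ω, term (k+1) ω ∂(P y)
        ≤ ∑ k ∈ Finset.range N', tstar * ∫ ω, stayInd M (k+1) ω ∂(P y) :=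
          Finset.sum_le_sum (fun k hk => htermk k (by
            have := Finset.mem_range.mp hk; omega))
      _ = tstar * ∑ k ∈ Finset.range N', ∫ ω, stayInd M (k+1) ω ∂(P y) := by
          rw [Finset.mul_sum]
      _ ≤ tstar * (b - 1) := mul_le_mul_of_nonneg_left hsum_stay htstar
  have hfinal : ∫ ω, Gcap M u (N'+1) ω ∂(P y)
      ≤ δ * b + δ * (tstar * (b - 1) + ∫ ω, Gcap M u (N'+1) ω ∂(P y)) := by
    calc ∫ ω, Gcap M u (N'+1) ω ∂(P y)
        = δ * ∫ ω, ((min (retTime M ω) (N'+1) : ℕ) : ℝ) ∂(P y)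
          + δ * ∑ k ∈ Finset.range (N'+1), ∫ ω, term k ω ∂(P y) := hkey
      _ = δ * ∫ ω, ((min (retTime M ω) (N'+1) : ℕ) : ℝ) ∂(P y)
          + δ * ((∑ k ∈ Finset.range N', ∫ ω, term (k+1) ω ∂(P y))
            + ∫ ω, Gcap M u (N'+1) ω ∂(P y)) := by rw [hsplit, hterm0]
      _ ≤ δ * b + δ * (tstar * (b - 1) + ∫ ω, Gcap M u (N'+1) ω ∂(P y)) := by
          have h1 := mul_le_mul_of_nonneg_left hminb hδ0
          have h2 := mul_le_mul_of_nonneg_left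
            (add_le_add_right hsum_terms (∫ ω, Gcap M u (N'+1) ω ∂(P y))) hδ0
          linarith
  have hkey2 : δ * b + δ * (tstar * (b - 1)) = (1 - δ) * tstar := by
    rw [htsdef]
    field_simp
    ring
  have hepos : 0 < 1 - δ := by
    have := Real.exp_pos (-u)
    simp only [hδdef]; linarith
  have hE : (1 - δ) * (∫ ω, Gcap M u (N'+1) ω ∂(P y)) ≤ (1 - δ) * tstar := by
    nlinarith [hfinal, hkey2]
  exact (mul_le_mul_iff_right₀ hepos).mp hE

lemma inside_bound {a b : ℝ}
    (hb : ∀ y ∉ M, ∫ ω, (retTime M ω : ℝ) ∂(P y) ≤ b)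
    (hcond : (1 - Real.exp (-u)) * b < 1)
    (hy0 : ∃ y, y ∉ M)
    (x : S) (hx : x ∈ M)
    (ha : ∫ ω, ((retTime M ω : ℝ) - 1) ∂(P x) ≤ a) :
    ∀ N : ℕ, ∫ ω, (Real.exp (u * ((min (retTime M ω) N - 1 : ℕ) : ℝ)) - 1) ∂(P x)
      ≤ (1 - Real.exp (-u)) * a / (1 - (1 - Real.exp (-u)) * b) := by
  classical
  set δ := 1 - Real.exp (-u) with hδdef
  set tstar := δ * b / (1 - δ * b) with htsdef
  have hδ0 : 0 ≤ δ := by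
    have : Real.exp (-u) ≤ 1 := by
      rw [← Real.exp_zero]
      exact Real.exp_le_exp.mpr (by linarith)
    simp only [hδdef]; linarith
  have hd : 0 < 1 - δ * b := by linarith
  obtain ⟨y0, hy0'⟩ := hy0
  have hb1 : 1 ≤ b := by
    have hτint0 := integrable_retTime hM hStart hMarkov hq0 hq1 hq (x := y0)
    have h1 : (1:ℝ) ≤ ∫ ω, (retTime M ω : ℝ) ∂(P y0) := by
      have hm := integral_mono_ae (μ := P y0) (integrable_const 1) hτint0
        (by filter_upwards [ae_retTime_pos hM hStart hMarkov hq0 hq1 hq y0] with ω h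
            exact_mod_cast h)
      simpa using hm
    linarith [hb y0 hy0']
  have htstar : 0 ≤ tstar := by
    apply div_nonneg _ (le_of_lt hd)
    nlinarith
  have hτint := integrable_retTime hM hStart hMarkov hq0 hq1 hq (x := x)
  have ha0 : 0 ≤ a := by
    have h1 : (0:ℝ) ≤ ∫ ω, ((retTime M ω : ℝ) - 1) ∂(P x) := by
      refine integral_nonneg_of_ae ?_
      filter_upwards [ae_retTime_pos hM hStart hMarkov hq0 hq1 hq x] with ω hω
      have : (1:ℝ) ≤ (retTime M ω : ℝ) := by exact_mod_cast hω
      simp only [Pi.zero_apply]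
      linarith
    linarith
  intro N
  set term : ℕ → (ℕ → S) → ℝ := fun k ω =>
    (if k < min (retTime M ω) N - 1
      then Real.exp (u * ((min (retTime M ω) N - 1 - k : ℕ) : ℝ)) - 1 else 0) with hterm
  have hterm_meas : ∀ k, Measurable (term k) := by
    intro k
    exact (measurable_from_top (f := fun m : ℕ =>
      (if k < min m N - 1 then Real.exp (u * ((min m N - 1 - k : ℕ) : ℝ)) - 1 else 0))).comp
      (measurable_retTime hM)
  have hterm_abs : ∀ k ω, |term k ω| ≤ Real.exp (u * N) := by
    intro k ω
    have he1 : (1:ℝ) ≤ Real.exp (u * N) := Real.one_le_exp (by positivity)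
    simp only [hterm]
    split
    · have h2 : Real.exp (u * ((min (retTime M ω) N - 1 - k : ℕ) : ℝ)) ≤ Real.exp (u * N) := by
        apply Real.exp_le_exp.mpr
        apply mul_le_mul_of_nonneg_left _ hu
        exact_mod_cast Nat.cast_le.mpr (by omega : min (retTime M ω) N - 1 - k ≤ N)
      have h3 : (1:ℝ) ≤ Real.exp (u * ((min (retTime M ω) N - 1 - k : ℕ) : ℝ)) :=
        Real.one_le_exp (by positivity)
      rw [abs_le]
      constructor <;> linarith
    · rw [abs_zero]; positivity
  have hterm_int : ∀ k, Integrable (term k) (P x) :=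
    fun k => integrable_bdd P (hterm_meas k) (hterm_abs k) x
  have hG_meas : Measurable (fun ω : ℕ → S =>
      Real.exp (u * ((min (retTime M ω) N - 1 : ℕ) : ℝ)) - 1) :=
    (measurable_from_top (f := fun m : ℕ =>
      Real.exp (u * ((min m N - 1 : ℕ) : ℝ)) - 1)).comp (measurable_retTime hM)
  have hmin_meas : Measurable (fun ω : ℕ → S => ((min (retTime M ω) N - 1 : ℕ) : ℝ)) :=
    (measurable_from_top (f := fun m : ℕ => ((min m N - 1 : ℕ) : ℝ))).comp
      (measurable_retTime hM)
  have hmin_int : Integrable (fun ω : ℕ → S => ((min (retTime M ω) N - 1 : ℕ) : ℝ)) (P x) := by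
    refine integrable_bdd P hmin_meas (C := N) (fun ω => ?_) x
    rw [abs_of_nonneg (by positivity)]
    exact_mod_cast Nat.cast_le.mpr (by omega : min (retTime M ω) N - 1 ≤ N)
  have hrw : ∀ ω : ℕ → S,
      Real.exp (u * ((min (retTime M ω) N - 1 : ℕ) : ℝ)) - 1
      = δ * ((min (retTime M ω) N - 1 : ℕ) : ℝ)
        + δ * ∑ k ∈ Finset.range (N - 1), term k ω := by
    intro ω
    simp only [hterm]
    exact exp_decomp _ (N - 1) (by omega)
  have hkey : ∫ ω, (Real.exp (u * ((min (retTime M ω) N - 1 : ℕ) : ℝ)) - 1) ∂(P x)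
      = δ * ∫ ω, ((min (retTime M ω) N - 1 : ℕ) : ℝ) ∂(P x)
        + δ * ∑ k ∈ Finset.range (N - 1), ∫ ω, term k ω ∂(P x) := by
    rw [integral_congr_ae (ae_of_all _ hrw), integral_add (hmin_int.const_mul δ)
      ((integrable_finset_sum _ (fun k _ => hterm_int k)).const_mul δ),
      integral_const_mul, integral_const_mul,
      integral_finset_sum _ (fun k _ => hterm_int k)]
  have hmina : ∫ ω, ((min (retTime M ω) N - 1 : ℕ) : ℝ) ∂(P x) ≤ a := by
    refine le_trans (integral_mono_ae hmin_int (hτint.sub (integrable_const 1)) ?_) ?_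
    · filter_upwards [ae_retTime_pos hM hStart hMarkov hq0 hq1 hq x] with ω hω
      have h4 : min (retTime M ω) N - 1 ≤ retTime M ω - 1 := by omega
      have h5 : ((retTime M ω - 1 : ℕ) : ℝ) = (retTime M ω : ℝ) - 1 := by
        rw [Nat.cast_sub hω]; norm_num
      calc ((min (retTime M ω) N - 1 : ℕ) : ℝ) ≤ ((retTime M ω - 1 : ℕ) : ℝ) :=
            Nat.cast_le.mpr h4
        _ = (retTime M ω : ℝ) - 1 := h5
    · exact ha
  have htermk : ∀ k, k < N - 1 → ∫ ω, term k ω ∂(P x)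
      ≤ tstar * ∫ ω, stayInd M (k+1) ω ∂(P x) := by
    intro k hk
    have hae0 := ae_term hM hStart hMarkov hu hq0 hq1 hq x (k+1) N (by omega) (by omega)
    have hae : ∀ᵐ ω ∂(P x), term k ω
        = stayInd M (k+1) ω * Gcap M u (N - (k+1)) (shift (k+1) ω) := by
      filter_upwards [hae0] with ω hω
      rw [← hω]
      simp only [hterm]
      by_cases h : k + 1 < min (retTime M ω) N
      · rw [if_pos h, if_pos (by omega : k < min (retTime M ω) N - 1)]
        have harg : min (retTime M ω) N - 1 - k = min (retTime M ω) N - (k+1) := by omega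
        rw [harg]
      · rw [if_neg h, if_neg (by omega : ¬ k < min (retTime M ω) N - 1)]
    rw [integral_congr_ae hae]
    exact peel hM hStart hMarkov (measurable_Gcap hM _) (Gcap_nonneg hu _)
      (Gcap_le hu _) htstar
      (fun z hz => outside_bound hM hStart hMarkov hu hq0 hq1 hq hb hcond (N - (k+1)) z hz)
      (k+1) x (by omega)
  have hsum_stay : ∑ k ∈ Finset.range (N - 1), ∫ ω, stayInd M (k+1) ω ∂(P x) ≤ a := by
    rw [← integral_finset_sum _ (fun k _ =>
      integrable_bdd P (measurable_stayInd hM (k+1)) (abs_stayInd_le (k+1)) x)]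
    refine le_trans (integral_mono_ae ?_ (hτint.sub (integrable_const 1)) ?_) ha
    · exact integrable_finset_sum _ (fun k _ =>
        integrable_bdd P (measurable_stayInd hM (k+1)) (abs_stayInd_le (k+1)) x)
    · filter_upwards [ae_retTime_pos hM hStart hMarkov hq0 hq1 hq x] with ω hω
      exact sum_stayInd_le (N - 1) ω hω
  have hsum_terms : ∑ k ∈ Finset.range (N - 1), ∫ ω, term k ω ∂(P x) ≤ tstar * a := by
    calc ∑ k ∈ Finset.range (N - 1), ∫ ω, term k ω ∂(P x)
        ≤ ∑ k ∈ Finset.range (N - 1), tstar * ∫ ω, stayInd M (k+1) ω ∂(P x) :=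
          Finset.sum_le_sum (fun k hk => htermk k (Finset.mem_range.mp hk))
      _ = tstar * ∑ k ∈ Finset.range (N - 1), ∫ ω, stayInd M (k+1) ω ∂(P x) := by
          rw [Finset.mul_sum]
      _ ≤ tstar * a := mul_le_mul_of_nonneg_left hsum_stay htstar
  have hfinal : ∫ ω, (Real.exp (u * ((min (retTime M ω) N - 1 : ℕ) : ℝ)) - 1) ∂(P x)
      ≤ δ * a + δ * (tstar * a) := by
    rw [hkey]
    have h1 := mul_le_mul_of_nonneg_left hmina hδ0
    have h2 := mul_le_mul_of_nonneg_left hsum_terms hδ0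
    linarith
  have hkey2 : δ * a + δ * (tstar * a) = δ * a / (1 - δ * b) := by
    rw [htsdef]
    field_simp
    ring
  rw [← hkey2]
  exact hfinal

end Core

end NormKuK0

/-- Operator-norm bound for the difference of the kernels
`K^u(x,dy) = E_x[e^{u(τ⁺_M - 1)} 1{X_{τ⁺_M} ∈ dy}]` and `K^0(x,dy) = P_x[X_{τ⁺_M} ∈ dy]`:
for real `u ≥ 0` with `sup_{x∉M} P_x[X₁ ∉ M] < e^{-u}` and
`(1 - e^{-u}) sup_{x∉M} E_x[τ⁺_M] < 1`,
`‖K^u - K^0‖ ≤ (1 - e^{-u}) sup_{x∈M} E_x[τ⁺_M - 1] / (1 - (1 - e^{-u}) sup_{x∉M} E_x[τ⁺_M])`,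
the operator norm being tested on functions `f` with `‖f‖_∞ ≤ 1`, and the suprema
being expressed through upper bounds `a` and `b`. -/
theorem norm_Ku_K0_bound
    {S : Type*} [MeasurableSpace S] [MeasurableSingletonClass S]
    (P : Kernel S (ℕ → S)) [IsMarkovKernel P]
    (hStart : ∀ x : S, P x {ω | ω 0 = x} = 1)
    (hMarkov : ∀ (x : S) (F : (ℕ → S) → ℝ), Measurable F → (∃ C, ∀ ω, |F ω| ≤ C) →
      ∫ ω, F (fun n => ω (n + 1)) ∂(P x) = ∫ ω, (∫ ω', F ω' ∂(P (ω 1))) ∂(P x))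
    (M : Set S) (hM : MeasurableSet M)
    (u : ℝ) (hu : 0 ≤ u)
    (q : ℝ) (hq : ∀ x ∉ M, (P x {ω | ω 1 ∉ M}).toReal ≤ q)
    (hqu : q < Real.exp (-u))
    (a b : ℝ)
    (ha : ∀ x ∈ M, ∫ ω, ((retTime M ω : ℝ) - 1) ∂(P x) ≤ a)
    (hb : ∀ x ∉ M, ∫ ω, (retTime M ω : ℝ) ∂(P x) ≤ b)
    (hcond : (1 - Real.exp (-u)) * b < 1)
    (f : S → ℝ) (hf : Measurable f) (hfb : ∀ y, |f y| ≤ 1) :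
    ∀ x ∈ M,
      |(∫ ω, Real.exp (u * ((retTime M ω : ℝ) - 1)) * f (ω (retTime M ω)) ∂(P x))
          - ∫ ω, f (ω (retTime M ω)) ∂(P x)|
        ≤ (1 - Real.exp (-u)) * a / (1 - (1 - Real.exp (-u)) * b) := by
  classical
  intro x hx
  open NormKuK0 in
  have hexp1 : Real.exp (-u) ≤ 1 := by
    rw [← Real.exp_zero]
    exact Real.exp_le_exp.mpr (by linarith)
  have hδ0 : (0:ℝ) ≤ 1 - Real.exp (-u) := by linarith
  have hd : (0:ℝ) < 1 - (1 - Real.exp (-u)) * b := by linarith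
  by_cases hMall : ∀ y, y ∈ M
  · -- M is everything: retTime ≡ 1
    have hτ1 : ∀ ω : ℕ → S, retTime M ω = 1 := by
      intro ω
      have hne : (1 : ℕ) ∈ {n | 1 ≤ n ∧ ω n ∈ M} := ⟨le_rfl, hMall (ω 1)⟩
      have h1 : retTime M ω ≤ 1 := Nat.sInf_le hne
      have h2 : 1 ≤ retTime M ω := (Nat.sInf_mem ⟨1, hne⟩).1
      omega
    have heq : ∀ ω : ℕ → S,
        Real.exp (u * ((retTime M ω : ℝ) - 1)) * f (ω (retTime M ω)) = f (ω (retTime M ω)) := by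
      intro ω
      rw [hτ1 ω]
      norm_num
    rw [integral_congr_ae (ae_of_all _ heq), sub_self, abs_zero]
    have ha0 : 0 ≤ a := by
      have h0 : ∫ ω, ((retTime M ω : ℝ) - 1) ∂(P x) = 0 := by
        have : ∀ ω : ℕ → S, ((retTime M ω : ℝ) - 1) = 0 := by
          intro ω; rw [hτ1 ω]; norm_num
        rw [integral_congr_ae (ae_of_all _ this), integral_zero]
      linarith [ha x hx]
    positivity
  · push_neg at hMall
    obtain ⟨y0, hy0⟩ := hMall
    have hq0 : 0 ≤ q := le_trans ENNReal.toReal_nonneg (hq y0 hy0)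
    have hq1 : q < 1 := lt_of_lt_of_le hqu hexp1
    -- notation
    set RR := (1 - Real.exp (-u)) * a / (1 - (1 - Real.exp (-u)) * b) with hRR
    have hτint := integrable_retTime hM hStart hMarkov hq0 hq1 hq (x := x)
    have hae1 := ae_retTime_pos hM hStart hMarkov hq0 hq1 hq x
    have ha0 : 0 ≤ a := by
      have h1 : (0:ℝ) ≤ ∫ ω, ((retTime M ω : ℝ) - 1) ∂(P x) := by
        refine integral_nonneg_of_ae ?_
        filter_upwards [hae1] with ω hω
        have : (1:ℝ) ≤ (retTime M ω : ℝ) := by exact_mod_cast hω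
        simp only [Pi.zero_apply]
        linarith
      linarith [ha x hx]
    have hRR0 : 0 ≤ RR := by rw [hRR]; positivity
    -- capped functions
    set gN : ℕ → (ℕ → S) → ℝ := fun N ω =>
      Real.exp (u * ((min (retTime M ω) N - 1 : ℕ) : ℝ)) with hgN
    have hgN_meas : ∀ N, Measurable (gN N) := by
      intro N
      exact (measurable_from_top (f := fun m : ℕ =>
        Real.exp (u * ((min m N - 1 : ℕ) : ℝ)))).comp (measurable_retTime hM)
    have hgN_pos : ∀ N ω, 1 ≤ gN N ω := by
      intro N ω
      exact Real.one_le_exp (by positivity)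
    have hgN_le : ∀ N ω, gN N ω ≤ Real.exp (u * N) := by
      intro N ω
      apply Real.exp_le_exp.mpr
      apply mul_le_mul_of_nonneg_left _ hu
      exact_mod_cast Nat.cast_le.mpr (by omega : min (retTime M ω) N - 1 ≤ N)
    have hgN_int : ∀ N, Integrable (gN N) (P x) := by
      intro N
      refine integrable_bdd P (hgN_meas N) (C := Real.exp (u * N)) (fun ω => ?_) x
      rw [abs_of_nonneg (by linarith [hgN_pos N ω])]
      exact hgN_le N ω
    -- bound from inside_bound
    have hIN : ∀ N, ∫ ω, gN N ω ∂(P x) ≤ 1 + RR := by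
      intro N
      have h1 := inside_bound hM hStart hMarkov hu hq0 hq1 hq hb hcond ⟨y0, hy0⟩ x hx
        (ha x hx) N
      have h2 : ∫ ω, (gN N ω - 1) ∂(P x) = ∫ ω, gN N ω ∂(P x) - 1 := by
        rw [integral_sub (hgN_int N) (integrable_const 1)]
        simp
      rw [hRR]
      have h3 : ∫ ω, (gN N ω - 1) ∂(P x)
          ≤ (1 - Real.exp (-u)) * a / (1 - (1 - Real.exp (-u)) * b) := h1
      rw [h2] at h3
      linarith
    -- the limit function
    set ginf : (ℕ → S) → ℝ := fun ω => Real.exp (u * ((retTime M ω : ℝ) - 1)) with hginf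
    have hginf_meas : Measurable ginf := by
      have h1 : Measurable fun ω : ℕ → S => ((retTime M ω : ℝ) - 1) :=
        ((measurable_from_top (f := fun m : ℕ => (m:ℝ))).comp (measurable_retTime hM)).sub
          measurable_const
      exact (Real.measurable_exp.comp (h1.const_mul u))
    have hginf_pos : ∀ ω, 0 < ginf ω := fun ω => Real.exp_pos _
    -- a.e. sup identity
    have hsup : ∀ᵐ ω ∂(P x),
        (⨆ N, ENNReal.ofReal (gN N ω)) = ENNReal.ofReal (ginf ω) := by
      filter_upwards [hae1] with ω hω
      have hle : ∀ N, gN N ω ≤ ginf ω := by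
        intro N
        rw [hginf]
        apply Real.exp_le_exp.mpr
        apply mul_le_mul_of_nonneg_left _ hu
        have h4 : ((min (retTime M ω) N - 1 : ℕ) : ℝ) ≤ ((retTime M ω - 1 : ℕ) : ℝ) :=
          Nat.cast_le.mpr (by omega)
        have h5 : ((retTime M ω - 1 : ℕ) : ℝ) = (retTime M ω : ℝ) - 1 := by
          rw [Nat.cast_sub hω]; norm_num
        linarith
      have heq : gN (retTime M ω) ω = ginf ω := by
        simp only [hgN, hginf]
        congr 1
        have h5 : ((retTime M ω - 1 : ℕ) : ℝ) = (retTime M ω : ℝ) - 1 := by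
          rw [Nat.cast_sub hω]; norm_num
        rw [min_self]
        rw [h5]
      apply le_antisymm
      · exact iSup_le fun N => ENNReal.ofReal_le_ofReal (hle N)
      · exact le_iSup_of_le (retTime M ω) (le_of_eq (by rw [heq]))
    -- MCT
    have hmono : Monotone (fun N => fun ω => ENNReal.ofReal (gN N ω)) := by
      intro N1 N2 hN ω
      apply ENNReal.ofReal_le_ofReal
      apply Real.exp_le_exp.mpr
      apply mul_le_mul_of_nonneg_left _ hu
      exact_mod_cast Nat.cast_le.mpr (by omega : min (retTime M ω) N1 - 1 ≤ min (retTime M ω) N2 - 1)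
    have hlin : ∫⁻ ω, ENNReal.ofReal (ginf ω) ∂(P x) ≤ ENNReal.ofReal (1 + RR) := by
      have h1 : ∫⁻ ω, ENNReal.ofReal (ginf ω) ∂(P x)
          = ∫⁻ ω, ⨆ N, ENNReal.ofReal (gN N ω) ∂(P x) :=
        lintegral_congr_ae (hsup.mono fun ω h => h.symm)
      rw [h1, lintegral_iSup (f := fun N ω => ENNReal.ofReal (gN N ω))
        (fun N => ENNReal.measurable_ofReal.comp (hgN_meas N)) hmono]
      apply iSup_le
      intro N
      have h2 : ∫⁻ ω, ENNReal.ofReal (gN N ω) ∂(P x) = ENNReal.ofReal (∫ ω, gN N ω ∂(P x)) :=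
        (ofReal_integral_eq_lintegral_ofReal (hgN_int N)
          (ae_of_all _ fun ω => by simp only [Pi.zero_apply]; linarith [hgN_pos N ω])).symm
      rw [h2]
      exact ENNReal.ofReal_le_ofReal (hIN N)
    -- integrability of ginf
    have hginf_int : Integrable ginf (P x) := by
      refine ⟨hginf_meas.aestronglyMeasurable, ?_⟩
      show (∫⁻ ω, ‖ginf ω‖₊ ∂(P x)) < ⊤
      have h1 : ∀ ω, (‖ginf ω‖₊ : ℝ≥0∞) = ENNReal.ofReal (ginf ω) := fun ω =>
        Real.enorm_eq_ofReal (le_of_lt (hginf_pos ω))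
      rw [lintegral_congr h1]
      exact lt_of_le_of_lt hlin ENNReal.ofReal_lt_top
    have hginf_intval : ∫ ω, ginf ω ∂(P x) ≤ 1 + RR := by
      rw [integral_eq_lintegral_of_nonneg_ae (ae_of_all _ fun ω => le_of_lt (hginf_pos ω))
        hginf_meas.aestronglyMeasurable]
      exact ENNReal.toReal_le_of_le_ofReal (by linarith) hlin
    -- final assembly
    have heval : Measurable fun ω : ℕ → S => f (ω (retTime M ω)) :=
      hf.comp (measurable_eval_retTime hM)
    have hfint : Integrable (fun ω => f (ω (retTime M ω))) (P x) :=
      integrable_bdd P heval (fun ω => hfb _) x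
    have hAint : Integrable (fun ω => ginf ω * f (ω (retTime M ω))) (P x) := by
      refine hginf_int.mono' (hginf_meas.mul heval).aestronglyMeasurable
        (ae_of_all _ fun ω => ?_)
      rw [Real.norm_eq_abs, abs_mul, abs_of_pos (hginf_pos ω)]
      calc ginf ω * |f (ω (retTime M ω))| ≤ ginf ω * 1 :=
            mul_le_mul_of_nonneg_left (hfb _) (le_of_lt (hginf_pos ω))
        _ = ginf ω := mul_one _
      -- norm vs abs: ‖ginf ω‖ = ginf ω
    have hsub : (∫ ω, ginf ω * f (ω (retTime M ω)) ∂(P x)) - ∫ ω, f (ω (retTime M ω)) ∂(P x)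
        = ∫ ω, (ginf ω * f (ω (retTime M ω)) - f (ω (retTime M ω))) ∂(P x) :=
      (integral_sub hAint hfint).symm
    have habs : |∫ ω, (ginf ω * f (ω (retTime M ω)) - f (ω (retTime M ω))) ∂(P x)|
        ≤ ∫ ω, (ginf ω - 1) ∂(P x) := by
      have h1 : |∫ ω, (ginf ω * f (ω (retTime M ω)) - f (ω (retTime M ω))) ∂(P x)|
          ≤ ∫ ω, |ginf ω * f (ω (retTime M ω)) - f (ω (retTime M ω))| ∂(P x) := by
        have := norm_integral_le_integral_norm (μ := P x)
          (f := fun ω => ginf ω * f (ω (retTime M ω)) - f (ω (retTime M ω)))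
        simpa [Real.norm_eq_abs] using this
      refine le_trans h1 (integral_mono_ae ((hAint.sub hfint).abs)
        (hginf_int.sub (integrable_const 1)) ?_)
      filter_upwards [hae1] with ω hω
      have hg1 : 1 ≤ ginf ω := by
        apply Real.one_le_exp
        have : (1:ℝ) ≤ (retTime M ω : ℝ) := by exact_mod_cast hω
        nlinarith
      have he : ginf ω * f (ω (retTime M ω)) - f (ω (retTime M ω))
          = (ginf ω - 1) * f (ω (retTime M ω)) := by ring
      rw [he, abs_mul, abs_of_nonneg (by linarith : (0:ℝ) ≤ ginf ω - 1)]
      calc (ginf ω - 1) * |f (ω (retTime M ω))| ≤ (ginf ω - 1) * 1 :=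
            mul_le_mul_of_nonneg_left (hfb _) (by linarith)
        _ = ginf ω - 1 := mul_one _
    have hlast : ∫ ω, (ginf ω - 1) ∂(P x) ≤ RR := by
      rw [integral_sub hginf_int (integrable_const 1)]
      simp only [integral_const, probReal_univ, smul_eq_mul, one_mul]
      linarith
    calc |(∫ ω, Real.exp (u * ((retTime M ω : ℝ) - 1)) * f (ω (retTime M ω)) ∂(P x))
          - ∫ ω, f (ω (retTime M ω)) ∂(P x)|
        = |∫ ω, (ginf ω * f (ω (retTime M ω)) - f (ω (retTime M ω))) ∂(P x)| := by
          rw [← hsub]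
      _ ≤ ∫ ω, (ginf ω - 1) ∂(P x) := habs
      _ ≤ RR := hlast
end

section
/- Let P be a k×k stochastic matrix, P̂ = I − P with blocks as above, b = max_{1≤l≤k−1} (row sum of off-diagonal entries in the first k−1 rows of P̂, i.e. P̂_{ll}) and â = P̂_{kk} ≠ 0; assume b/â < 1/8 and â − 6b > 0. Then the smallest-modulus nonzero eigenvalue λ⋆_{k−1} of the finite-rank kernel K⋆ (equivalently, the eigenvalue 1 − α of P where α is the eigenvalue of P̂ produced by block-triangularization) is real and simple and satisfies |λ⋆_{k−1} − (1 − â)| ≤ 2b, while every other nonzero eigenvalue λ⋆_i of K⋆ satisfies |1 − λ⋆_i| ≤ 4b. -/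
open Matrix Finset Polynomial

attribute [local instance]
  Matrix.linftyOpSeminormedAddCommGroup
  Matrix.linftyOpNormedAddCommGroup
  Matrix.linftyOpNormedSpace
  Matrix.linftyOpNormedRing
  Matrix.linftyOpNormedAlgebra

section Aux

variable {m : Type*} [Fintype m] [DecidableEq m]

lemma aux_mem_spectrum_iff_isRoot {K : Type*} [Field K]
    (M : Matrix m m K) (μ : K) : μ ∈ spectrum K M ↔ M.charpoly.IsRoot μ := by
  have key : M.charpoly.eval μ = (algebraMap K (Matrix m m K) μ - M).det := by
    rw [Matrix.charpoly, ← Polynomial.coe_evalRingHom, RingHom.map_det]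
    congr 1
    ext i j
    by_cases h : i = j
    · subst h
      simp [Matrix.charmatrix_apply_eq, Matrix.algebraMap_matrix_apply]
    · simp [Matrix.charmatrix_apply_ne _ _ _ h, Matrix.algebraMap_matrix_apply, h]
  rw [spectrum.mem_iff, Matrix.isUnit_iff_isUnit_det, isUnit_iff_ne_zero, not_ne_iff,
    Polynomial.IsRoot.def, key]

lemma aux_linfty_norm_le [Nonempty m] {n' : Type*} [Fintype n']
    {α : Type*} [SeminormedAddCommGroup α] (M : Matrix m n' α) {r : ℝ}
    (h : ∀ i, ∑ j, ‖M i j‖ ≤ r) : ‖M‖ ≤ r := by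
  have hr : 0 ≤ r :=
    le_trans (Finset.sum_nonneg fun j _ => norm_nonneg _) (h (Classical.arbitrary m))
  rw [Matrix.linfty_opNorm_def]
  have key : ∀ i : m, (∑ j, ‖M i j‖₊ : NNReal) ≤ r.toNNReal := by
    intro i
    rw [← NNReal.coe_le_coe]
    push_cast
    rw [Real.coe_toNNReal _ hr]
    exact h i
  calc ((Finset.univ.sup fun i : m => ∑ j, ‖M i j‖₊ : NNReal) : ℝ)
      ≤ (r.toNNReal : ℝ) := by exact_mod_cast Finset.sup_le fun i _ => key i
    _ = r := Real.coe_toNNReal _ hr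

lemma aux_norm_oneSub_inv_le {R : Type*} [NormedRing R] [NormOneClass R] [HasSummableGeomSeries R]
    (x : R) (h : ‖x‖ < 1) : ‖(↑(Units.oneSub x h)⁻¹ : R)‖ ≤ (1 - ‖x‖)⁻¹ := by
  set y := (↑(Units.oneSub x h)⁻¹ : R) with hy_def
  have hy : y * (1 - x) = 1 := by
    have h2 := (Units.oneSub x h).inv_mul
    have h3 : (↑(Units.oneSub x h) : R) = 1 - x := Units.val_oneSub x h
    rw [← hy_def] at h2
    rw [← h3]
    exact_mod_cast h2
  have hyx : y = 1 + y * x := by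
    have : y - y * x = 1 := by rw [← hy, mul_sub, mul_one]
    nth_rewrite 1 [← sub_add_cancel y (y * x)]
    rw [this]
  have h1 : ‖y‖ ≤ 1 + ‖y‖ * ‖x‖ := by
    calc ‖y‖ = ‖1 + y * x‖ := by rw [← hyx]
      _ ≤ ‖(1 : R)‖ + ‖y * x‖ := norm_add_le _ _
      _ ≤ 1 + ‖y‖ * ‖x‖ := by rw [norm_one]; exact add_le_add (le_refl _) (norm_mul_le _ _)
  have hx1 : 0 < 1 - ‖x‖ := by linarith
  have h2 : ‖y‖ * (1 - ‖x‖) ≤ 1 := by nlinarith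
  rw [inv_eq_one_div]
  exact (le_div_iff₀ hx1).mpr h2

lemma aux_charpoly_conj {R : Type*} [CommRing R]
    (E N E' : Matrix m m R) (h : E * E' = 1) :
    (E * N * E').charpoly = N.charpoly := by
  have hC : ∀ M M' : Matrix m m R, (M * M').map (Polynomial.C : R → R[X]) =
      M.map Polynomial.C * M'.map Polynomial.C := fun M M' =>
    Matrix.map_mul (f := (Polynomial.C : R →+* R[X]))
  have hone : (1 : Matrix m m R).map (Polynomial.C : R → R[X]) = 1 :=
    Matrix.map_one _ Polynomial.C_0 Polynomial.C_1
  have hcomm : Matrix.scalar m (X : R[X]) * E.map Polynomial.C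
      = E.map Polynomial.C * Matrix.scalar m (X : R[X]) :=
    (Matrix.scalar_commute (X : R[X]) (fun r' => Commute.all _ _) (E.map Polynomial.C)).eq
  have h1 : Matrix.charmatrix (E * N * E') =
      E.map Polynomial.C * Matrix.charmatrix N * E'.map Polynomial.C := by
    rw [Matrix.charmatrix, Matrix.charmatrix, mul_sub, sub_mul]
    congr 1
    · refine Eq.symm ?_
      calc E.map Polynomial.C * Matrix.scalar m (X : R[X]) * E'.map Polynomial.C
          = Matrix.scalar m (X : R[X]) * (E.map Polynomial.C * E'.map Polynomial.C) := by
            rw [← hcomm, mul_assoc]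
        _ = Matrix.scalar m (X : R[X]) := by rw [← hC, h, hone, mul_one]
    · simp only [RingHom.mapMatrix_apply]
      rw [hC, hC]
  have hdet1 : (E.map (Polynomial.C : R → R[X])).det * (E'.map Polynomial.C).det = 1 := by
    rw [← Matrix.det_mul, ← hC, h, hone, Matrix.det_one]
  rw [Matrix.charpoly, Matrix.charpoly, h1, Matrix.det_mul, Matrix.det_mul]
  calc (E.map Polynomial.C).det * (Matrix.charmatrix N).det * (E'.map Polynomial.C).det
      = (E.map Polynomial.C).det * (E'.map Polynomial.C).det * (Matrix.charmatrix N).det := by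
        ring
    _ = (Matrix.charmatrix N).det := by rw [hdet1, one_mul]

lemma aux_charpoly_fin_one {R : Type*} [CommRing R] (d : R) :
    (Matrix.of (fun _ _ => d) : Matrix (Fin 1) (Fin 1) R).charpoly = X - C d := by
  rw [Matrix.charpoly, Matrix.det_fin_one]
  exact Matrix.charmatrix_apply_eq _ _

lemma aux_inverse_norm_le [Nonempty m]
    (B : Matrix m m ℝ) {t c : ℝ} (hc : 0 ≤ c) (hB : ‖B‖ ≤ c) (ht : c < t) :
    IsUnit (t • (1 : Matrix m m ℝ) - B) ∧
      ‖Ring.inverse (t • (1 : Matrix m m ℝ) - B)‖ ≤ (t - c)⁻¹ := by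
  haveI : CompleteSpace (Matrix m m ℝ) := FiniteDimensional.complete ℝ _
  have htpos : 0 < t := lt_of_le_of_lt hc ht
  set y : Matrix m m ℝ := t⁻¹ • B with hy_def
  have hty : t * ‖y‖ ≤ c := by
    rw [hy_def, norm_smul, Real.norm_eq_abs, abs_of_pos (inv_pos.2 htpos)]
    rw [← mul_assoc, mul_inv_cancel₀ (ne_of_gt htpos), one_mul]
    exact hB
  have hynorm : ‖y‖ < 1 := by
    by_contra hcon
    push_neg at hcon
    nlinarith
  have hrw : t • (1 : Matrix m m ℝ) - B = t • ((1 : Matrix m m ℝ) - y) := by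
    rw [smul_sub, hy_def, smul_smul, mul_inv_cancel₀ (ne_of_gt htpos), one_smul]
  set u0 : (Matrix m m ℝ)ˣ := Units.oneSub y hynorm with hu0
  have hval : (↑u0 : Matrix m m ℝ) = 1 - y := rfl
  have hmul1 : (t • (1 : Matrix m m ℝ) - B) * (t⁻¹ • (↑u0⁻¹ : Matrix m m ℝ)) = 1 := by
    rw [hrw, smul_mul_smul_comm, mul_inv_cancel₀ (ne_of_gt htpos), ← hval, u0.mul_inv, one_smul]
  have hmul2 : (t⁻¹ • (↑u0⁻¹ : Matrix m m ℝ)) * (t • (1 : Matrix m m ℝ) - B) = 1 := by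
    rw [hrw, smul_mul_smul_comm, inv_mul_cancel₀ (ne_of_gt htpos), ← hval, u0.inv_mul, one_smul]
  set U : (Matrix m m ℝ)ˣ := ⟨t • (1 : Matrix m m ℝ) - B, t⁻¹ • ↑u0⁻¹, hmul1, hmul2⟩ with hU
  refine ⟨⟨U, rfl⟩, ?_⟩
  have hinv : Ring.inverse (t • (1 : Matrix m m ℝ) - B) = t⁻¹ • (↑u0⁻¹ : Matrix m m ℝ) := by
    have : Ring.inverse (↑U : Matrix m m ℝ) = ↑U⁻¹ := Ring.inverse_unit U
    exact this
  rw [hinv]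
  have h1 : ‖t⁻¹ • (↑u0⁻¹ : Matrix m m ℝ)‖ ≤ t⁻¹ * (1 - ‖y‖)⁻¹ := by
    rw [norm_smul, Real.norm_eq_abs, abs_of_pos (inv_pos.2 htpos)]
    exact mul_le_mul_of_nonneg_left (aux_norm_oneSub_inv_le y hynorm) (le_of_lt (inv_pos.2 htpos))
  have h2 : t⁻¹ * (1 - ‖y‖)⁻¹ = (t * (1 - ‖y‖))⁻¹ := (mul_inv _ _).symm
  have h3 : t - c ≤ t * (1 - ‖y‖) := by nlinarith
  have h4 : (0 : ℝ) < t - c := by linarith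
  calc ‖t⁻¹ • (↑u0⁻¹ : Matrix m m ℝ)‖ ≤ (t * (1 - ‖y‖))⁻¹ := by rw [← h2]; exact h1
    _ ≤ (t - c)⁻¹ := by
        apply inv_anti₀ h4 h3

lemma aux_dot_le {k : ℕ} (v w : Fin k → ℝ) {cv : ℝ} (hv : ∑ j, |v j| ≤ cv) :
    |v ⬝ᵥ w| ≤ cv * ‖w‖ := by
  have h0 : ∀ j, |w j| ≤ ‖w‖ := fun j => by
    have := norm_le_pi_norm w j
    simpa using this
  calc |v ⬝ᵥ w| = |∑ j, v j * w j| := rfl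
    _ ≤ ∑ j, |v j * w j| := Finset.abs_sum_le_sum_abs _ _
    _ = ∑ j, |v j| * |w j| := by simp [abs_mul]
    _ ≤ ∑ j, |v j| * ‖w‖ := Finset.sum_le_sum fun j _ =>
        mul_le_mul_of_nonneg_left (h0 j) (abs_nonneg _)
    _ = (∑ j, |v j|) * ‖w‖ := by rw [← Finset.sum_mul]
    _ ≤ cv * ‖w‖ := mul_le_mul_of_nonneg_right hv (norm_nonneg _)

end Aux

/-- Eigenvalue estimates for the finite-rank kernel `K⋆` in terms of its matrix `P`:
for a stochastic matrix `P` with `â = 1 - P_{kk} ≠ 0`, `b ≥ max_{l<k} (1 - P_{ll})`,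
`b/â < 1/8` and `â - 6b > 0`, the smallest-modulus (nonzero) eigenvalue is real and
simple and lies within `2b` of `1 - â`, while every other nonzero eigenvalue `μ`
satisfies `|1 - μ| ≤ 4b`. -/
theorem finite_rank_kernel_eigenvalue_estimates
    {n : ℕ}
    (P : Matrix (Fin (n + 2)) (Fin (n + 2)) ℝ)
    (hPnn : ∀ i j, 0 ≤ P i j)
    (hProw : ∀ i, ∑ j, P i j = 1)
    (a b : ℝ)
    (hadef : a = 1 - P (Fin.last (n + 1)) (Fin.last (n + 1)))
    (ha0 : a ≠ 0)
    (hb : ∀ i : Fin (n + 2), i ≠ Fin.last (n + 1) → 1 - P i i ≤ b)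
    (hba : b / a < 1 / 8)
    (hab : 0 < a - 6 * b) :
    ∃ lam : ℝ,
      (lam : ℂ) ∈ spectrum ℂ (P.map Complex.ofReal) ∧
      |lam - (1 - a)| ≤ 2 * b ∧
      -- `lam` is a simple eigenvalue
      ((P.map Complex.ofReal).charpoly).rootMultiplicity (lam : ℂ) = 1 ∧
      -- every other nonzero eigenvalue `μ` satisfies `|1 - μ| ≤ 4b`, and `lam` is the
      -- eigenvalue of smallest modulus
      ∀ μ : ℂ, μ ∈ spectrum ℂ (P.map Complex.ofReal) → μ ≠ (lam : ℂ) → μ ≠ 0 →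
        ‖1 - μ‖ ≤ 4 * b ∧ |lam| ≤ ‖μ‖ := by
  classical
  set L : Fin (n + 2) := Fin.last (n + 1) with hL
  -- basic positivity facts
  have hPle1 : ∀ i j, P i j ≤ 1 := by
    intro i j
    have h1 : P i j ≤ ∑ k, P i k :=
      Finset.single_le_sum (fun k _ => hPnn i k) (Finset.mem_univ j)
    rw [hProw i] at h1
    exact h1
  have hoffdiag : ∀ i : Fin (n + 2), ∑ j ∈ Finset.univ.erase i, P i j = 1 - P i i := by
    intro i
    have h1 := Finset.sum_erase_add Finset.univ (P i) (Finset.mem_univ i)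
    rw [hProw i] at h1
    linarith
  have hcs_ne : ∀ i : Fin (n + 1), i.castSucc ≠ L := fun i => (Fin.castSucc_lt_last i).ne
  have hb0 : 0 ≤ b := by
    have h0 : (0 : Fin (n + 2)) ≠ L := by
      simp [hL, Fin.ext_iff]
    have h1 := hb 0 h0
    have h2 := hPle1 0 0
    linarith
  have hapos : 0 < a := by linarith
  have haup : a ≤ 1 := by
    have := hPnn L L
    linarith [hadef]
  have h8 : 8 * b < a := by
    have := (div_lt_iff₀ hapos).mp hba
    linarith
  -- blocks of P
  set P11 : Matrix (Fin (n + 1)) (Fin (n + 1)) ℝ :=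
    Matrix.of (fun i j => P i.castSucc j.castSucc) with hP11def
  set p12 : Fin (n + 1) → ℝ := fun i => P i.castSucc L with hp12def
  set p21 : Fin (n + 1) → ℝ := fun j => P L j.castSucc with hp21def
  set A11 : Matrix (Fin (n + 1)) (Fin (n + 1)) ℝ := (1 : Matrix _ _ ℝ) - P11 with hA11def
  -- row sum bounds
  have herase : ∀ i : Fin (n + 1),
      ∑ j ∈ Finset.univ.erase i, P i.castSucc j.castSucc ≤ 1 - P i.castSucc i.castSucc := by
    intro i
    rw [← Finset.sum_image (f := fun j' => P i.castSucc j')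
      (fun x _ y _ h => Fin.castSucc_injective _ h)]
    have hsub : (Finset.univ.erase i).image Fin.castSucc ⊆ Finset.univ.erase i.castSucc := by
      intro j' hj'
      obtain ⟨j, hj, rfl⟩ := Finset.mem_image.mp hj'
      exact Finset.mem_erase.mpr ⟨fun hc => (Finset.mem_erase.mp hj).1
        (Fin.castSucc_injective _ hc), Finset.mem_univ _⟩
    calc ∑ j' ∈ (Finset.univ.erase i).image Fin.castSucc, P i.castSucc j'
        ≤ ∑ j' ∈ Finset.univ.erase i.castSucc, P i.castSucc j' :=
          Finset.sum_le_sum_of_subset_of_nonneg hsub (fun j' _ _ => hPnn _ _)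
      _ = 1 - P i.castSucc i.castSucc := hoffdiag i.castSucc
  have hA11row : ∀ i, ∑ j, |A11 i j| ≤ 2 * b := by
    intro i
    have hentry : ∀ j, |A11 i j| = if i = j then 1 - P i.castSucc i.castSucc
        else P i.castSucc j.castSucc := by
      intro j
      rw [hA11def]
      by_cases h : i = j
      · subst h
        rw [if_pos rfl]
        simp only [Matrix.sub_apply, Matrix.one_apply_eq, hP11def, Matrix.of_apply]
        rw [abs_of_nonneg (by linarith [hPle1 i.castSucc i.castSucc])]
      · simp only [Matrix.sub_apply, Matrix.one_apply_ne h, hP11def, Matrix.of_apply, if_neg h]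
        rw [zero_sub, abs_neg, abs_of_nonneg (hPnn _ _)]
    have hsplit := Finset.sum_erase_add Finset.univ (fun j => |A11 i j|) (Finset.mem_univ i)
    have h1 : |A11 i i| = 1 - P i.castSucc i.castSucc := by rw [hentry i, if_pos rfl]
    have h2 : ∑ j ∈ Finset.univ.erase i, |A11 i j| =
        ∑ j ∈ Finset.univ.erase i, P i.castSucc j.castSucc := by
      apply Finset.sum_congr rfl
      intro j hj
      rw [hentry j, if_neg (Ne.symm (Finset.mem_erase.mp hj).1)]
    have h3 := herase i
    have h4 := hb i.castSucc (hcs_ne i)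
    calc ∑ j, |A11 i j| = ∑ j ∈ Finset.univ.erase i, |A11 i j| + |A11 i i| := hsplit.symm
      _ ≤ (1 - P i.castSucc i.castSucc) + (1 - P i.castSucc i.castSucc) := by
          rw [h1, h2]; linarith
      _ ≤ 2 * b := by linarith
  have hA11norm : ‖A11‖ ≤ 2 * b := aux_linfty_norm_le A11 (by simpa using hA11row)
  have hp12i : ∀ i, |p12 i| ≤ b := by
    intro i
    show |P i.castSucc L| ≤ b
    rw [abs_of_nonneg (hPnn _ _)]
    have hmem : L ∈ Finset.univ.erase i.castSucc :=
      Finset.mem_erase.mpr ⟨Ne.symm (hcs_ne i), Finset.mem_univ _⟩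
    have h1 : P i.castSucc L ≤ ∑ j ∈ Finset.univ.erase i.castSucc, P i.castSucc j :=
      Finset.single_le_sum (f := fun j => P i.castSucc j) (fun j _ => hPnn _ _) hmem
    rw [hoffdiag] at h1
    have h2 := hb i.castSucc (hcs_ne i)
    linarith
  have hp12norm : ‖p12‖ ≤ b := by
    rw [pi_norm_le_iff_of_nonneg hb0]
    intro i
    simpa using hp12i i
  have hp21sum : ∑ j, |p21 j| ≤ a := by
    have h1 : ∀ j : Fin (n + 1), |p21 j| = P L j.castSucc := fun j =>
      abs_of_nonneg (hPnn _ _)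
    have hsub : (Finset.univ : Finset (Fin (n + 1))).image Fin.castSucc ⊆
        Finset.univ.erase L := by
      intro j' hj'
      obtain ⟨j, hj, rfl⟩ := Finset.mem_image.mp hj'
      exact Finset.mem_erase.mpr ⟨hcs_ne j, Finset.mem_univ _⟩
    calc ∑ j, |p21 j| = ∑ j : Fin (n + 1), P L j.castSucc := by
          exact Finset.sum_congr rfl fun j _ => h1 j
      _ = ∑ j' ∈ (Finset.univ : Finset (Fin (n + 1))).image Fin.castSucc, P L j' :=
          (Finset.sum_image (fun x _ y _ h => Fin.castSucc_injective _ h)).symm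
      _ ≤ ∑ j' ∈ Finset.univ.erase L, P L j' :=
          Finset.sum_le_sum_of_subset_of_nonneg hsub (fun j' _ _ => hPnn _ _)
      _ = 1 - P L L := hoffdiag L
      _ = a := hadef.symm
  -- the scalar fixed-point function
  set g : ℝ → ℝ := fun t =>
    a + p21 ⬝ᵥ ((Ring.inverse (t • (1 : Matrix (Fin (n + 1)) (Fin (n + 1)) ℝ) - A11)) *ᵥ p12)
    with hgdef
  have hIcc : ∀ t ∈ Set.Icc (a - 2 * b) (a + 2 * b),
      IsUnit (t • (1 : Matrix (Fin (n + 1)) (Fin (n + 1)) ℝ) - A11) ∧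
      ‖(Ring.inverse (t • (1 : Matrix (Fin (n + 1)) (Fin (n + 1)) ℝ) - A11)) *ᵥ p12‖ ≤
        2 * b / a := by
    intro t ht
    obtain ⟨ht1, ht2⟩ := ht
    have h2bt : 2 * b < t := by linarith
    obtain ⟨hu, hn⟩ := aux_inverse_norm_le A11 (by linarith) hA11norm h2bt
    refine ⟨hu, ?_⟩
    have h1 : ‖(Ring.inverse (t • (1 : Matrix (Fin (n + 1)) (Fin (n + 1)) ℝ) - A11)) *ᵥ p12‖ ≤
        (t - 2 * b)⁻¹ * b := by
      calc ‖(Ring.inverse (t • (1 : Matrix (Fin (n + 1)) (Fin (n + 1)) ℝ) - A11)) *ᵥ p12‖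
          ≤ ‖Ring.inverse (t • (1 : Matrix (Fin (n + 1)) (Fin (n + 1)) ℝ) - A11)‖ * ‖p12‖ :=
            Matrix.linfty_opNorm_mulVec _ _
        _ ≤ (t - 2 * b)⁻¹ * b := by
            apply mul_le_mul hn hp12norm (norm_nonneg _)
            exact inv_nonneg.2 (by linarith)
    refine h1.trans ?_
    have h4 : (0 : ℝ) < t - 2 * b := by linarith
    rw [inv_mul_eq_div, div_le_div_iff₀ h4 hapos]
    nlinarith
  have hgmaps : ∀ t ∈ Set.Icc (a - 2 * b) (a + 2 * b), |g t - a| ≤ 2 * b := by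
    intro t ht
    obtain ⟨-, hn⟩ := hIcc t ht
    rw [hgdef]
    simp only [add_sub_cancel_left]
    calc |p21 ⬝ᵥ _| ≤ a * ‖(Ring.inverse (t • (1 : Matrix (Fin (n + 1)) (Fin (n + 1)) ℝ) - A11)) *ᵥ p12‖ :=
          aux_dot_le p21 _ hp21sum
      _ ≤ a * (2 * b / a) := mul_le_mul_of_nonneg_left hn (le_of_lt hapos)
      _ = 2 * b := by field_simp
  haveI : CompleteSpace (Matrix (Fin (n + 1)) (Fin (n + 1)) ℝ) :=
    FiniteDimensional.complete ℝ _
  have hgcont : ContinuousOn g (Set.Icc (a - 2 * b) (a + 2 * b)) := by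
    intro t ht
    have hu := (hIcc t ht).1
    have h1 : ContinuousAt
        (fun t : ℝ => t • (1 : Matrix (Fin (n + 1)) (Fin (n + 1)) ℝ) - A11) t :=
      ((continuous_id.smul continuous_const).sub continuous_const).continuousAt
    have h2 : ContinuousAt Ring.inverse
        (t • (1 : Matrix (Fin (n + 1)) (Fin (n + 1)) ℝ) - A11) := by
      have h := NormedRing.inverse_continuousAt hu.unit
      rwa [IsUnit.unit_spec] at h
    have h3 : ContinuousAt (fun t : ℝ =>
        Ring.inverse (t • (1 : Matrix (Fin (n + 1)) (Fin (n + 1)) ℝ) - A11)) t :=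
      ContinuousAt.comp (f := fun t : ℝ =>
        t • (1 : Matrix (Fin (n + 1)) (Fin (n + 1)) ℝ) - A11) h2 h1
    have h4 : Continuous (fun M : Matrix (Fin (n + 1)) (Fin (n + 1)) ℝ => p21 ⬝ᵥ (M *ᵥ p12)) := by
      simp only [dotProduct, Matrix.mulVec]
      refine continuous_finset_sum _ fun j _ => continuous_const.mul ?_
      refine continuous_finset_sum _ fun k _ => ?_
      exact (Continuous.matrix_elem continuous_id j k).mul continuous_const
    exact (continuous_const.continuousAt.add
      (h4.continuousAt.comp h3)).continuousWithinAt
  -- IVT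
  obtain ⟨α, hαmem, hαfix⟩ : ∃ α ∈ Set.Icc (a - 2 * b) (a + 2 * b), g α = α := by
    have hle : a - 2 * b ≤ a + 2 * b := by linarith
    have hfc : ContinuousOn (fun t => g t - t) (Set.Icc (a - 2 * b) (a + 2 * b)) :=
      hgcont.sub continuousOn_id
    have h1 : 0 ≤ g (a - 2 * b) - (a - 2 * b) := by
      have h := (abs_le.mp (hgmaps (a - 2 * b) (Set.left_mem_Icc.mpr hle))).1
      linarith
    have h2 : g (a + 2 * b) - (a + 2 * b) ≤ 0 := by
      have h := (abs_le.mp (hgmaps (a + 2 * b) (Set.right_mem_Icc.mpr hle))).2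
      linarith
    have hmem : (0 : ℝ) ∈ Set.Icc (g (a + 2 * b) - (a + 2 * b)) (g (a - 2 * b) - (a - 2 * b)) :=
      ⟨h2, h1⟩
    obtain ⟨α, hαmem, hα⟩ := intermediate_value_Icc' hle hfc hmem
    exact ⟨α, hαmem, sub_eq_zero.mp hα⟩
  -- the fixed point data
  obtain ⟨hαl, hαr⟩ := hαmem
  obtain ⟨hUα, hwnorm⟩ := hIcc α ⟨hαl, hαr⟩
  set w : Fin (n + 1) → ℝ :=
    (Ring.inverse (α • (1 : Matrix (Fin (n + 1)) (Fin (n + 1)) ℝ) - A11)) *ᵥ p12 with hwdef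
  have hαval : α = a + p21 ⬝ᵥ w := hαfix.symm
  have hweq : (α • (1 : Matrix (Fin (n + 1)) (Fin (n + 1)) ℝ) - A11) *ᵥ w = p12 := by
    rw [hwdef, Matrix.mulVec_mulVec, Ring.mul_inverse_cancel _ hUα, Matrix.one_mulVec]
  have hkey : ∀ i, α * w i - (w i - (P11 *ᵥ w) i) = p12 i := by
    intro i
    have h1 := congrFun hweq i
    rw [Matrix.sub_mulVec, hA11def, Matrix.sub_mulVec, Matrix.one_mulVec] at h1
    have h2 : ((α • (1 : Matrix (Fin (n + 1)) (Fin (n + 1)) ℝ)) *ᵥ w) = α • w := by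
      rw [Matrix.smul_mulVec, Matrix.one_mulVec]
    rw [h2] at h1
    simpa using h1
  -- block matrices
  set scol : Matrix (Fin (n + 1)) (Fin 1) ℝ := Matrix.of fun i _ => -(w i) with hscol
  set rrow : Matrix (Fin 1) (Fin (n + 1)) ℝ := Matrix.of fun _ j => p21 j with hrrow
  set Q : Matrix (Fin (n + 1)) (Fin (n + 1)) ℝ := P11 - scol * rrow with hQ
  set dmat : Matrix (Fin 1) (Fin 1) ℝ := Matrix.of fun _ _ => 1 - α with hdmat
  set E : Matrix (Fin (n + 1) ⊕ Fin 1) (Fin (n + 1) ⊕ Fin 1) ℝ :=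
    Matrix.fromBlocks 1 scol 0 1 with hE
  set E' : Matrix (Fin (n + 1) ⊕ Fin 1) (Fin (n + 1) ⊕ Fin 1) ℝ :=
    Matrix.fromBlocks 1 (-scol) 0 1 with hE'
  set N' : Matrix (Fin (n + 1) ⊕ Fin 1) (Fin (n + 1) ⊕ Fin 1) ℝ :=
    Matrix.fromBlocks Q 0 rrow dmat with hN'
  have hEE' : E * E' = 1 := by
    rw [hE, hE', Matrix.fromBlocks_multiply, ← Matrix.fromBlocks_one, Matrix.fromBlocks_inj]
    refine ⟨by simp, by simp, by simp, by simp⟩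
  have hQadd : Q + scol * rrow = P11 := sub_add_cancel _ _
  have hSw : ∀ i, ∑ k, P11 i k * w k = (P11 *ᵥ w) i := fun i => rfl
  have hb12 : P11 * (-scol) + scol * dmat = (Matrix.of fun i (_ : Fin 1) => p12 i) := by
    ext i j
    have h2 := hkey i
    rw [← hSw i] at h2
    simp only [Matrix.add_apply, Matrix.mul_apply, Matrix.neg_apply, hscol, hdmat,
      Matrix.of_apply, Fin.sum_univ_one, neg_neg]
    linear_combination h2
  have hb22 : rrow * (-scol) + dmat = (Matrix.of fun (_ _ : Fin 1) => P L L) := by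
    ext i j
    have h2 : α = a + ∑ k, p21 k * w k := hαval
    simp only [Matrix.add_apply, Matrix.mul_apply, Matrix.neg_apply, hscol, hrrow, hdmat,
      Matrix.of_apply, neg_neg]
    linear_combination -h2 - hadef
  have hconj : E * N' * E' =
      Matrix.fromBlocks P11 (Matrix.of fun i (_ : Fin 1) => p12 i) rrow
        (Matrix.of fun (_ _ : Fin 1) => P L L) := by
    rw [hE, hE', hN', Matrix.fromBlocks_multiply, Matrix.fromBlocks_multiply,
      Matrix.fromBlocks_inj]
    refine ⟨?_, ?_, ?_, ?_⟩
    · simp only [Matrix.one_mul, Matrix.mul_one, Matrix.mul_zero, Matrix.zero_mul,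
        add_zero, zero_add]
      exact hQadd
    · simp only [Matrix.one_mul, Matrix.mul_one, Matrix.mul_zero, Matrix.zero_mul,
        add_zero, zero_add]
      rw [hQadd]
      exact hb12
    · simp only [Matrix.one_mul, Matrix.mul_one, Matrix.mul_zero, Matrix.zero_mul,
        add_zero, zero_add]
    · simp only [Matrix.one_mul, Matrix.mul_one, Matrix.mul_zero, Matrix.zero_mul,
        add_zero, zero_add]
      exact hb22
  -- reindexing
  set F : Fin (n + 1) ⊕ Fin 1 ≃ Fin (n + 2) := finSumFinEquiv with hF
  have hre : Matrix.reindex F.symm F.symm P =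
      Matrix.fromBlocks P11 (Matrix.of fun i (_ : Fin 1) => p12 i) rrow
        (Matrix.of fun (_ _ : Fin 1) => P L L) := by
    have hFl : ∀ i : Fin (n + 1), F (Sum.inl i) = i.castSucc := fun i => rfl
    have hFr : ∀ j : Fin 1, F (Sum.inr j) = L := by
      intro j
      rw [Subsingleton.elim j 0]
      rfl
    ext i j
    rcases i with i | i <;> rcases j with j | j <;>
      simp [Matrix.reindex_apply, Matrix.submatrix_apply, hFl, hFr, hP11def, hp12def, hrrow,
        hp21def]
  have hcharP : P.charpoly = Q.charpoly * (X - C (1 - α)) := by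
    calc P.charpoly = (Matrix.reindex F.symm F.symm P).charpoly :=
          (Matrix.charpoly_reindex _ _).symm
      _ = (E * N' * E').charpoly := by rw [hre, ← hconj]
      _ = N'.charpoly := aux_charpoly_conj E N' E' hEE'
      _ = Q.charpoly * dmat.charpoly := by
          rw [hN']
          exact Matrix.charpoly_fromBlocks_zero₁₂ Q rrow dmat
      _ = Q.charpoly * (X - C (1 - α)) := by rw [hdmat, aux_charpoly_fin_one]
  -- over ℂ
  set lam : ℝ := 1 - α with hlamdef
  have hcharPc : (P.map Complex.ofReal).charpoly
      = (Q.map Complex.ofReal).charpoly * (X - C ((lam : ℝ) : ℂ)) := by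
    have h1 : (P.map Complex.ofReal).charpoly = P.charpoly.map Complex.ofRealHom :=
      Matrix.charpoly_map P Complex.ofRealHom
    have h2 : (Q.map Complex.ofReal).charpoly = Q.charpoly.map Complex.ofRealHom :=
      Matrix.charpoly_map Q Complex.ofRealHom
    rw [h1, hcharP, Polynomial.map_mul, ← h2, Polynomial.map_sub, Polynomial.map_X,
      Polynomial.map_C]
    norm_num [hlamdef]
  haveI : CompleteSpace (Matrix (Fin (n + 1)) (Fin (n + 1)) ℂ) :=
    FiniteDimensional.complete ℂ _
  have hQnorm : ‖(1 : Matrix (Fin (n + 1)) (Fin (n + 1)) ℂ) - Q.map Complex.ofReal‖ ≤ 4 * b := by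
    apply aux_linfty_norm_le
    intro i
    have hent : ∀ j, ((1 : Matrix (Fin (n + 1)) (Fin (n + 1)) ℂ) - Q.map Complex.ofReal) i j
        = ((((1 : Matrix (Fin (n + 1)) (Fin (n + 1)) ℝ) - Q) i j : ℝ) : ℂ) := by
      intro j
      by_cases h : i = j
      · subst h
        simp [Matrix.sub_apply, Matrix.one_apply_eq, Matrix.map_apply]
      · simp [Matrix.sub_apply, Matrix.one_apply_ne h, Matrix.map_apply]
    have hent2 : ∀ j, ((1 : Matrix (Fin (n + 1)) (Fin (n + 1)) ℝ) - Q) i j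
        = A11 i j - w i * p21 j := by
      intro j
      simp only [Matrix.sub_apply, Matrix.add_apply, hQ, hA11def, Matrix.mul_apply, hscol, hrrow,
        Matrix.of_apply, Fin.sum_univ_one]
      ring
    have hwi : |w i| ≤ 2 * b / a := by
      have := norm_le_pi_norm w i
      simp only [Real.norm_eq_abs] at this
      exact this.trans hwnorm
    calc ∑ j, ‖((1 : Matrix (Fin (n + 1)) (Fin (n + 1)) ℂ) - Q.map Complex.ofReal) i j‖
        = ∑ j, |A11 i j - w i * p21 j| := by
          refine Finset.sum_congr rfl fun j _ => ?_
          rw [hent j, Complex.norm_real, Real.norm_eq_abs, hent2 j]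
      _ ≤ ∑ j, (|A11 i j| + |w i| * |p21 j|) := by
          refine Finset.sum_le_sum fun j _ => ?_
          calc |A11 i j - w i * p21 j| ≤ |A11 i j| + |w i * p21 j| := abs_sub _ _
            _ = |A11 i j| + |w i| * |p21 j| := by rw [abs_mul]
      _ = (∑ j, |A11 i j|) + |w i| * ∑ j, |p21 j| := by
          rw [Finset.sum_add_distrib, Finset.mul_sum]
      _ ≤ 2 * b + (2 * b / a) * a := by
          have h1 := hA11row i
          have h2 : |w i| * ∑ j, |p21 j| ≤ (2 * b / a) * a := by
            apply mul_le_mul hwi hp21sum (Finset.sum_nonneg fun j _ => abs_nonneg _)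
            positivity
          linarith
      _ = 4 * b := by field_simp; ring
  have hroot_bound : ∀ μ : ℂ, ((Q.map Complex.ofReal).charpoly).IsRoot μ → ‖1 - μ‖ ≤ 4 * b := by
    intro μ hμ
    have h1 : μ ∈ spectrum ℂ (Q.map Complex.ofReal) := (aux_mem_spectrum_iff_isRoot _ _).mpr hμ
    have h2 : (1 - μ) ∈ spectrum ℂ
        ((1 : Matrix (Fin (n + 1)) (Fin (n + 1)) ℂ) - Q.map Complex.ofReal) := by
      rw [spectrum.mem_iff] at h1 ⊢
      intro hc
      apply h1
      have heq : algebraMap ℂ (Matrix (Fin (n + 1)) (Fin (n + 1)) ℂ) (1 - μ)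
          - ((1 : Matrix (Fin (n + 1)) (Fin (n + 1)) ℂ) - Q.map Complex.ofReal)
          = -(algebraMap ℂ (Matrix (Fin (n + 1)) (Fin (n + 1)) ℂ) μ - Q.map Complex.ofReal) := by
        rw [map_sub, _root_.map_one]
        abel
      rw [heq] at hc
      simpa using hc.neg
    exact (spectrum.norm_le_norm_of_mem h2).trans hQnorm
  -- conclusion
  have hαlow : 4 * b < α := by linarith
  have hnotroot : ¬ ((Q.map Complex.ofReal).charpoly).IsRoot ((lam : ℝ) : ℂ) := by
    intro hc
    have h1 := hroot_bound _ hc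
    have h2 : (1 : ℂ) - ((lam : ℝ) : ℂ) = ((α : ℝ) : ℂ) := by
      rw [hlamdef]
      push_cast
      ring
    rw [h2, Complex.norm_real, Real.norm_eq_abs, abs_of_pos (by linarith : (0:ℝ) < α)] at h1
    linarith
  refine ⟨lam, ?_, ?_, ?_, ?_⟩
  · rw [aux_mem_spectrum_iff_isRoot, hcharPc]
    simp [Polynomial.IsRoot]
  · rw [hlamdef, abs_le]
    constructor <;> linarith
  · rw [hcharPc]
    have hne : (Q.map Complex.ofReal).charpoly * (X - C ((lam : ℝ) : ℂ)) ≠ 0 :=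
      mul_ne_zero (Matrix.charpoly_monic _).ne_zero (Polynomial.X_sub_C_ne_zero _)
    rw [Polynomial.rootMultiplicity_mul hne, Polynomial.rootMultiplicity_eq_zero hnotroot,
      Polynomial.rootMultiplicity_X_sub_C_self]
  · intro μ hμ hne hμ0
    have h1 : ((P.map Complex.ofReal).charpoly).IsRoot μ :=
      (aux_mem_spectrum_iff_isRoot _ _).mp hμ
    rw [hcharPc] at h1
    have h2 : ((Q.map Complex.ofReal).charpoly).IsRoot μ := by
      have h1' : ((Q.map Complex.ofReal).charpoly).eval μ * ((X - C ((lam : ℝ) : ℂ)).eval μ)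
          = 0 := by
        rw [← Polynomial.eval_mul]
        exact h1
      rcases mul_eq_zero.mp h1' with h | h
      · exact h
      · exfalso
        apply hne
        rw [Polynomial.eval_sub, Polynomial.eval_X, Polynomial.eval_C, sub_eq_zero] at h
        exact h
    have h3 := hroot_bound μ h2
    refine ⟨h3, ?_⟩
    have h4 : 1 - 4 * b ≤ ‖μ‖ := by
      have h5 : ‖(1 : ℂ)‖ = 1 := norm_one
      have heq : μ + (1 - μ) = 1 := by ring
      have h6 : ‖(1 : ℂ)‖ ≤ ‖μ‖ + ‖1 - μ‖ := by
        calc ‖(1 : ℂ)‖ = ‖μ + (1 - μ)‖ := by rw [heq]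
          _ ≤ ‖μ‖ + ‖1 - μ‖ := norm_add_le _ _
      linarith
    have h7 : |lam| ≤ 1 - 4 * b := by
      rw [hlamdef, abs_le]
      constructor <;> linarith
    linarith
end
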